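/- arXiv:1102.1146 — 6 statements merged into one kernel-verified Lean document; each statement's English description precedes it below -/
import Mathlib

section
/- The two conditions ∫₀¹ x^{-1} (∫₀ˣ ν̄(y) dy) dx < ∞ and Σ_{k=1}^∞ Φ(k)/k² < ∞ are equivalent, where ν̄(x) = ν([x,1]) and Φ(z) = ∫₀¹ (1-(1-x)^z) ν(dx). -/
/-!
By Tonelli, both conditions are finiteness of an integral against `ν` over `(0,1]`: the first of
`G(t) = ∫₀¹ min(t,x)/x dx`, the second of `F(t) = ∑ₖ (1-(1-t)^k)/k²`. Both kernels lie within a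
factor `2` of `S(t) = ∑ₖ min(t,1/k)/k` (all three are of order `t log(1/t)`). For `F` this is
Bernoulli's inequality in the form `min(kt,1)/2 ≤ 1-(1-t)^k ≤ min(kt,1)`; for `G` cut `(0,1]` at
the points `1/k`, on which pieces the integrand `min(t,x)/x` is antitone. Tonelli needs `ν` to be
σ-finite on `(0,1]`, which follows from `∫ x ν(dx) < ∞`.
-/

open MeasureTheory Set ENNReal

lemma sigmaFinite_of_lintegral_lt_top {α : Type*} [MeasurableSpace α] {μ : Measure α}
    {f : α → ℝ≥0∞} (hf : AEMeasurable f μ) (hf₀ : ∀ᵐ x ∂μ, f x ≠ 0)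
    (hfin : ∫⁻ x, f x ∂μ < ∞) : SigmaFinite μ := by
  have : IsFiniteMeasure (μ.withDensity f) := isFiniteMeasure_withDensity hfin.ne
  rw [← withDensity_inv_same₀ hf hf₀ (ae_lt_top' hf hfin.ne |>.mono fun _ => ne_of_lt)]
  exact SigmaFinite.withDensity_of_ne_top <|
    (withDensity_absolutelyContinuous μ f).ae_le (hf₀.mono fun _ => ENNReal.inv_ne_top.2)

lemma setLIntegral_lt_top_of_le_const_mul {α : Type*} [MeasurableSpace α] {μ : Measure α}
    {s : Set α} (hs : MeasurableSet s) {f g : α → ℝ≥0∞} {c : ℝ≥0∞} (hc : c ≠ ∞)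
    (hfg : ∀ x ∈ s, f x ≤ c * g x) (hg : ∫⁻ x in s, g x ∂μ < ∞) : ∫⁻ x in s, f x ∂μ < ∞ :=
  ((setLIntegral_mono' hs hfg).trans_eq (lintegral_const_mul' c g hc)).trans_lt
    (mul_lt_top hc.lt_top hg)

lemma one_sub_one_sub_pow_le_min {t : ℝ} (ht : t ≤ 1) (k : ℕ) :
    1 - (1 - t) ^ k ≤ min (k * t) 1 := by
  have hbern := one_add_mul_le_pow (a := -t) (by linarith) k
  simp only [mul_neg, ← sub_eq_add_neg] at hbern
  have hpos : 0 ≤ (1 - t) ^ k := pow_nonneg (by linarith) k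
  exact le_min (by linarith) (by linarith)

lemma min_le_two_mul_one_sub_one_sub_pow {t : ℝ} (ht₀ : 0 ≤ t) (ht₁ : t ≤ 1) (k : ℕ) :
    min (k * t) 1 ≤ 2 * (1 - (1 - t) ^ k) := by
  have hkt : 0 ≤ (k : ℝ) * t := by positivity
  have hprod : (1 - t) ^ k * (1 + k * t) ≤ 1 :=
    calc (1 - t) ^ k * (1 + k * t) ≤ (1 - t) ^ k * (1 + t) ^ k :=
          mul_le_mul_of_nonneg_left (one_add_mul_le_pow (by linarith) k)
            (pow_nonneg (by linarith) k)
      _ = (1 - t ^ 2) ^ k := by rw [← mul_pow]; ring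
      _ ≤ 1 := pow_le_one₀ (by nlinarith) (by nlinarith)
  rcases le_total ((k : ℝ) * t) 1 with h | h
  · rw [min_eq_left h]; nlinarith
  · rw [min_eq_right h]; nlinarith

lemma min_inv_div_eq {k : ℝ} (hk : 0 < k) (t : ℝ) : min t k⁻¹ / k = min (k * t) 1 / k ^ 2 := by
  rw [← mul_inv_cancel₀ hk.ne', ← mul_min_of_nonneg _ _ hk.le]
  field_simp

lemma ofReal_div_natCast_add_one_sq (a : ℝ) (n : ℕ) :
    ENNReal.ofReal a / ((n : ℝ≥0∞) + 1) ^ 2 = ENNReal.ofReal (a / ((n : ℝ) + 1) ^ 2) := by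
  rw [ENNReal.ofReal_div_of_pos (by positivity), ENNReal.ofReal_pow (by positivity)]
  norm_cast

lemma antitoneOn_min_div {t : ℝ} (ht : 0 ≤ t) : AntitoneOn (fun x => min t x / x) (Ioi 0) := by
  intro x hx y hy hxy
  dsimp only
  rw [div_le_div_iff₀ hy hx, min_mul_of_nonneg _ _ (le_of_lt hx),
    min_mul_of_nonneg _ _ (le_of_lt hy), mul_comm y x]
  exact min_le_min (mul_le_mul_of_nonneg_left hxy ht) le_rfl

lemma iUnion_Ioc_inv_add_two_inv_add_one :
    ⋃ n : ℕ, Ioc (((n : ℝ) + 2)⁻¹) ((n : ℝ) + 1)⁻¹ = Ioc 0 1 := by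
  ext x
  simp only [mem_iUnion, mem_Ioc]
  constructor
  · rintro ⟨n, hlo, hhi⟩
    exact ⟨(by positivity : (0 : ℝ) < _).trans hlo,
      hhi.trans (inv_le_one_of_one_le₀ (by linarith [n.cast_nonneg (α := ℝ)]))⟩
  · rintro ⟨hx₀, hx₁⟩
    have hx : 1 ≤ x⁻¹ := one_le_inv_iff₀.2 ⟨hx₀, hx₁⟩
    refine ⟨⌊x⁻¹ - 1⌋₊, ?_, ?_⟩
    · rw [inv_lt_comm₀ (by positivity) hx₀]
      linarith [Nat.lt_floor_add_one (x⁻¹ - 1)]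
    · rw [le_inv_comm₀ hx₀ (by positivity)]
      linarith [Nat.floor_le (sub_nonneg.2 hx)]

lemma setLIntegral_Ioc_zero_one_eq_tsum (μ : Measure ℝ) (f : ℝ → ℝ≥0∞) :
    ∫⁻ x in Ioc 0 1, f x ∂μ = ∑' n : ℕ, ∫⁻ x in Ioc (((n : ℝ) + 2)⁻¹) ((n : ℝ) + 1)⁻¹, f x ∂μ := by
  have hanti : Antitone fun n : ℕ => ((n : ℝ) + 1)⁻¹ := fun m n h => by
    dsimp only; gcongr
  rw [← iUnion_Ioc_inv_add_two_inv_add_one, lintegral_iUnion (fun _ => measurableSet_Ioc)]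
  simpa [add_assoc, one_add_one_eq_two] using hanti.pairwise_disjoint_on_Ioc_succ

lemma ofReal_mul_sub_le_setLIntegral_Ioc {f : ℝ → ℝ} {a b : ℝ} (hab : a ≤ b)
    (hf : AntitoneOn f (Icc a b)) :
    ENNReal.ofReal (f b * (b - a)) ≤ ∫⁻ x in Ioc a b, ENNReal.ofReal (f x) := by
  rw [ENNReal.ofReal_mul' (sub_nonneg.2 hab), ← Real.volume_Ioc, ← setLIntegral_const]
  exact setLIntegral_mono' measurableSet_Ioc fun x hx =>
    ENNReal.ofReal_le_ofReal (hf ⟨hx.1.le, hx.2⟩ ⟨hab, le_rfl⟩ hx.2)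

lemma setLIntegral_Ioc_le_ofReal_mul_sub {f : ℝ → ℝ} {a b : ℝ} (hab : a ≤ b)
    (hf : AntitoneOn f (Icc a b)) :
    ∫⁻ x in Ioc a b, ENNReal.ofReal (f x) ≤ ENNReal.ofReal (f a * (b - a)) := by
  rw [ENNReal.ofReal_mul' (sub_nonneg.2 hab), ← Real.volume_Ioc, ← setLIntegral_const]
  exact setLIntegral_mono' measurableSet_Ioc fun x hx =>
    ENNReal.ofReal_le_ofReal (hf ⟨le_rfl, hab⟩ ⟨hx.1.le, hx.2⟩ hx.1.le)

lemma setLIntegral_Ioo_measure_Ici (μ : Measure ℝ) [SFinite μ] (x : ℝ) :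
    ∫⁻ y in Ioo 0 x, μ (Ici y) = ∫⁻ t, ENNReal.ofReal (min t x) ∂μ := by
  have hind : ∀ y t : ℝ, (Ici y).indicator (1 : ℝ → ℝ≥0∞) t = (Iic t).indicator 1 y := by
    intro y t
    simp only [indicator, mem_Ici, mem_Iic, Pi.one_apply]
  calc ∫⁻ y in Ioo 0 x, μ (Ici y)
      = ∫⁻ y in Ioo 0 x, ∫⁻ t, (Ici y).indicator 1 t ∂μ := by
        simp_rw [lintegral_indicator_one measurableSet_Ici]
    _ = ∫⁻ t, (∫⁻ y in Ioo 0 x, (Iic t).indicator 1 y) ∂μ := by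
        simp_rw [← hind]
        refine lintegral_lintegral_swap (f := fun y t : ℝ => (Ici y).indicator 1 t)
          (Measurable.aemeasurable ?_)
        exact measurable_const.indicator (measurableSet_le measurable_fst measurable_snd)
    _ = ∫⁻ t, ENNReal.ofReal (min t x) ∂μ := by
        refine lintegral_congr fun t => ?_
        rw [lintegral_indicator_one measurableSet_Iic, Measure.restrict_apply measurableSet_Iic,
          inter_comm, measure_congr ((ae_eq_refl _).inter Iio_ae_eq_Iic.symm), Ioo_inter_Iio,
          Real.volume_Ioo, sub_zero, min_comm]

noncomputable def tailKernel (t : ℝ) : ℝ≥0∞ :=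
  ∫⁻ x in Ioo 0 1, ENNReal.ofReal (min t x / x)

noncomputable def laplaceKernel (t : ℝ) : ℝ≥0∞ :=
  ∑' n : ℕ, ENNReal.ofReal (1 - (1 - t) ^ (n + 1)) / ((n : ℝ≥0∞) + 1) ^ 2

noncomputable def truncatedHarmonicSum (t : ℝ) : ℝ≥0∞ :=
  ∑' n : ℕ, ENNReal.ofReal (min t ((n : ℝ) + 1)⁻¹ / ((n : ℝ) + 1))

lemma tailKernel_eq_tsum (t : ℝ) :
    tailKernel t = ∑' n : ℕ, ∫⁻ x in Ioc (((n : ℝ) + 2)⁻¹) ((n : ℝ) + 1)⁻¹,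
      ENNReal.ofReal (min t x / x) := by
  rw [tailKernel, setLIntegral_congr Ioo_ae_eq_Ioc, setLIntegral_Ioc_zero_one_eq_tsum]

lemma antitoneOn_min_div_Icc {t : ℝ} (ht : 0 ≤ t) (n : ℕ) :
    AntitoneOn (fun x => min t x / x) (Icc (((n : ℝ) + 2)⁻¹) ((n : ℝ) + 1)⁻¹) :=
  (antitoneOn_min_div ht).mono fun _ hx => (by positivity : (0 : ℝ) < _).trans_le hx.1

lemma tailKernel_le_truncatedHarmonicSum {t : ℝ} (ht : 0 ≤ t) :
    tailKernel t ≤ truncatedHarmonicSum t := by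
  rw [tailKernel_eq_tsum]
  refine ENNReal.tsum_le_tsum fun n => ?_
  have hab : ((n : ℝ) + 2)⁻¹ ≤ ((n : ℝ) + 1)⁻¹ := by gcongr; linarith
  refine (setLIntegral_Ioc_le_ofReal_mul_sub hab (antitoneOn_min_div_Icc ht n)).trans
    (ENNReal.ofReal_le_ofReal ?_)
  calc min t ((n : ℝ) + 2)⁻¹ / ((n : ℝ) + 2)⁻¹ * (((n : ℝ) + 1)⁻¹ - ((n : ℝ) + 2)⁻¹)
      = min t ((n : ℝ) + 2)⁻¹ / ((n : ℝ) + 1) := by field_simp; ring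
    _ ≤ min t ((n : ℝ) + 1)⁻¹ / ((n : ℝ) + 1) := by gcongr

lemma truncatedHarmonicSum_le_two_mul_tailKernel {t : ℝ} (ht : 0 ≤ t) :
    truncatedHarmonicSum t ≤ 2 * tailKernel t := by
  rw [tailKernel_eq_tsum, ← ENNReal.tsum_mul_left]
  refine ENNReal.tsum_le_tsum fun n => ?_
  have hab : ((n : ℝ) + 2)⁻¹ ≤ ((n : ℝ) + 1)⁻¹ := by gcongr; linarith
  refine le_trans ?_ (mul_le_mul_right (ofReal_mul_sub_le_setLIntegral_Ioc hab
    (antitoneOn_min_div_Icc ht n)) 2)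
  rw [← ENNReal.ofReal_ofNat 2, ← ENNReal.ofReal_mul zero_le_two]
  refine ENNReal.ofReal_le_ofReal ?_
  have hmin : 0 ≤ min t ((n : ℝ) + 1)⁻¹ := le_min ht (by positivity)
  calc min t ((n : ℝ) + 1)⁻¹ / ((n : ℝ) + 1)
      ≤ 2 * (min t ((n : ℝ) + 1)⁻¹ / ((n : ℝ) + 2)) := by
        rw [mul_div_assoc', div_le_div_iff₀ (by positivity) (by positivity)]
        nlinarith
    _ = 2 * (min t ((n : ℝ) + 1)⁻¹ / ((n : ℝ) + 1)⁻¹ * (((n : ℝ) + 1)⁻¹ - ((n : ℝ) + 2)⁻¹)) := by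
        field_simp; ring

lemma laplaceKernel_le_truncatedHarmonicSum {t : ℝ} (ht : t ≤ 1) :
    laplaceKernel t ≤ truncatedHarmonicSum t := by
  refine ENNReal.tsum_le_tsum fun n => ?_
  rw [ofReal_div_natCast_add_one_sq, min_inv_div_eq (by positivity)]
  refine ENNReal.ofReal_le_ofReal (div_le_div_of_nonneg_right ?_ (by positivity))
  exact_mod_cast one_sub_one_sub_pow_le_min ht (n + 1)

lemma truncatedHarmonicSum_le_two_mul_laplaceKernel {t : ℝ} (ht₀ : 0 ≤ t) (ht₁ : t ≤ 1) :
    truncatedHarmonicSum t ≤ 2 * laplaceKernel t := by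
  rw [laplaceKernel, ← ENNReal.tsum_mul_left]
  refine ENNReal.tsum_le_tsum fun n => ?_
  rw [ofReal_div_natCast_add_one_sq, min_inv_div_eq (by positivity), ← ENNReal.ofReal_ofNat 2,
    ← ENNReal.ofReal_mul zero_le_two, mul_div_assoc']
  refine ENNReal.ofReal_le_ofReal (div_le_div_of_nonneg_right ?_ (by positivity))
  exact_mod_cast min_le_two_mul_one_sub_one_sub_pow ht₀ ht₁ (n + 1)

lemma measure_Icc_eq_restrict_Ioc_apply_Ici (ν : Measure ℝ) {y : ℝ} (hy : 0 < y) :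
    ν (Icc y 1) = ν.restrict (Ioc 0 1) (Ici y) := by
  rw [Measure.restrict_apply measurableSet_Ici]
  congr 1
  ext z
  exact ⟨fun hz => ⟨hz.1, hy.trans_le hz.1, hz.2⟩, fun hz => ⟨hz.1, hz.2.2⟩⟩

lemma setLIntegral_tail_div_eq_lintegral_tailKernel (ν : Measure ℝ)
    [SFinite (ν.restrict (Ioc 0 1))] {nubar : ℝ → ℝ≥0∞}
    (hnubar : ∀ x ∈ Ioo (0 : ℝ) 1, nubar x = ν (Icc x 1)) :
    ∫⁻ x in Ioo 0 1, (∫⁻ y in Ioo 0 x, nubar y) / ENNReal.ofReal x =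
      ∫⁻ t in Ioc 0 1, tailKernel t ∂ν := by
  calc ∫⁻ x in Ioo 0 1, (∫⁻ y in Ioo 0 x, nubar y) / ENNReal.ofReal x
      = ∫⁻ x in Ioo 0 1, ∫⁻ t in Ioc 0 1, ENNReal.ofReal (min t x / x) ∂ν := by
        refine setLIntegral_congr_fun measurableSet_Ioo fun x hx => ?_
        have hinner : ∫⁻ y in Ioo 0 x, nubar y = ∫⁻ y in Ioo 0 x, ν.restrict (Ioc 0 1) (Ici y) :=
          setLIntegral_congr_fun measurableSet_Ioo fun y hy =>
            (hnubar y ⟨hy.1, hy.2.trans hx.2⟩).trans (measure_Icc_eq_restrict_Ioc_apply_Ici ν hy.1)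
        rw [hinner, setLIntegral_Ioo_measure_Ici, div_eq_mul_inv,
          ← lintegral_mul_const' _ _ (ENNReal.inv_ne_top.2 (ENNReal.ofReal_pos.2 hx.1).ne')]
        simp_rw [ENNReal.ofReal_div_of_pos hx.1, div_eq_mul_inv]
    _ = ∫⁻ t in Ioc 0 1, tailKernel t ∂ν :=
        lintegral_lintegral_swap (f := fun x t : ℝ => ENNReal.ofReal (min t x / x))
          (by fun_prop)

lemma tsum_div_sq_eq_lintegral_laplaceKernel {ν : Measure ℝ} {Φ : ℕ → ℝ≥0∞}
    (hΦ : ∀ k : ℕ, Φ k = ∫⁻ x in Ioc (0 : ℝ) 1, ENNReal.ofReal (1 - (1 - x) ^ k) ∂ν) :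
    ∑' k : ℕ, Φ (k + 1) / ((k : ℝ≥0∞) + 1) ^ 2 = ∫⁻ t in Ioc 0 1, laplaceKernel t ∂ν := by
  unfold laplaceKernel
  rw [lintegral_tsum fun k => by fun_prop]
  refine tsum_congr fun k => ?_
  rw [hΦ, div_eq_mul_inv, ← lintegral_mul_const' _ _ (ENNReal.inv_ne_top.2 (by positivity))]
  simp_rw [div_eq_mul_inv]

/-- The two conditions `∫₀¹ x⁻¹ (∫₀ˣ ν̄(y) dy) dx < ∞` and
`∑_{k=1}^∞ Φ(k)/k² < ∞` are equivalent, where `ν̄(x) = ν([x,1])` and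
`Φ(z) = ∫₀¹ (1-(1-x)^z) ν(dx)`. -/
theorem tail_integral_iff_sum_laplace
    (ν : Measure ℝ)
    (hx : ∫⁻ x in Ioc (0:ℝ) 1, ENNReal.ofReal x ∂ν < ⊤)
    (nubar : ℝ → ℝ≥0∞) (hnubar : ∀ x ∈ Ioo (0:ℝ) 1, nubar x = ν (Icc x 1))
    (Φ : ℕ → ℝ≥0∞)
    (hΦ : ∀ k : ℕ, Φ k = ∫⁻ x in Ioc (0:ℝ) 1, ENNReal.ofReal (1 - (1 - x) ^ k) ∂ν) :
    (∫⁻ x in Ioo (0:ℝ) 1,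
        (∫⁻ y in Ioo (0:ℝ) x, nubar y) / ENNReal.ofReal x < ⊤)
      ↔ (∑' k : ℕ, Φ (k + 1) / ((k : ℝ≥0∞) + 1) ^ 2 < ⊤) := by
  have : SigmaFinite (ν.restrict (Ioc 0 1)) :=
    sigmaFinite_of_lintegral_lt_top (by fun_prop)
      ((ae_restrict_mem measurableSet_Ioc).mono fun x hx => (ENNReal.ofReal_pos.2 hx.1).ne') hx
  rw [setLIntegral_tail_div_eq_lintegral_tailKernel ν hnubar,
    tsum_div_sq_eq_lintegral_laplaceKernel hΦ]
  constructor
  · refine setLIntegral_lt_top_of_le_const_mul measurableSet_Ioc (ofNat_ne_top (n := 2))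
      fun t ht => ?_
    exact (laplaceKernel_le_truncatedHarmonicSum ht.2).trans
      (truncatedHarmonicSum_le_two_mul_tailKernel ht.1.le)
  · refine setLIntegral_lt_top_of_le_const_mul measurableSet_Ioc (ofNat_ne_top (n := 2))
      fun t ht => ?_
    exact (tailKernel_le_truncatedHarmonicSum ht.1.le).trans
      (truncatedHarmonicSum_le_two_mul_laplaceKernel ht.1.le ht.2)
end

section
/- Occupancy count comparison: Let (p_k)_{k≥1} be a probability mass function with values in (0,1) and define κ_{n,r} := C(n,r) Σ_{j≥1} p_j^r (1-p_j)^{n-r}. For fixed integers 1 ≤ r < s there exists a constant c > 0 (depending only on r and s) such that κ_{n,r} ≥ c κ_{2n,s} for all n ≥ s. -/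
/-!
Pointwise in `x = p j`, write `x^s (1-x)^(2n-s) = x^k (1-x)^m · x^r (1-x)^(n-r)` with
`k = s - r`, `m = n + r - s ≥ n / s`. Since `(1-x)^m ≤ e^(-mx)` and `y^k e^(-y) ≤ k!`,
the extra factor `x^k (1-x)^m` is at most `k! (s/n)^k`, which absorbs the excess
`C(2n,s) / C(n,r) = O(n^(s-r))` of the binomial coefficients. Summing over `j` gives the theorem.
-/

open Set Real Nat

lemma mul_pow_mul_one_sub_pow_le_factorial {x : ℝ} (hx0 : 0 ≤ x) (hx1 : x ≤ 1) (k m : ℕ) :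
    (m * x) ^ k * (1 - x) ^ m ≤ k ! := by
  have hexp : (1 - x) ^ m ≤ exp (-(m * x)) :=
    calc (1 - x) ^ m ≤ exp (-x) ^ m := pow_le_pow_left₀ (by linarith) (one_sub_le_exp_neg x) m
      _ = exp (-(m * x)) := by rw [← exp_nat_mul]; ring_nf
  have hpow : (m * x) ^ k ≤ k ! * exp (m * x) := by
    rw [← div_le_iff₀' (by positivity)]
    exact pow_div_factorial_le_exp _ (by positivity) k
  calc (m * x) ^ k * (1 - x) ^ m ≤ k ! * exp (m * x) * exp (-(m * x)) := by gcongr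
    _ = k ! := by rw [mul_assoc, ← exp_add, add_neg_cancel, exp_zero, mul_one]

lemma Nat.pow_le_pow_mul_factorial_mul_choose {r s n : ℕ} (hrs : r ≤ s) (hn : s ≤ n) :
    n ^ r ≤ s ^ r * (r ! * n.choose r) := by
  obtain rfl | hs := s.eq_zero_or_pos
  · simp [Nat.le_zero.1 hrs]
  have hn' : n ≤ s * (n + 1 - r) := by
    obtain ⟨a, rfl⟩ := Nat.exists_eq_add_of_le hn
    obtain ⟨b, rfl⟩ := Nat.exists_eq_add_of_le hrs
    rw [show r + b + a + 1 - r = b + a + 1 by omega]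
    nlinarith
  calc n ^ r ≤ (s * (n + 1 - r)) ^ r := Nat.pow_le_pow_left hn' r
    _ = s ^ r * (n + 1 - r) ^ r := Nat.mul_pow _ _ _
    _ ≤ s ^ r * (r ! * n.choose r) := by
      rw [← Nat.descFactorial_eq_factorial_mul_choose]
      exact Nat.mul_le_mul_left _ (Nat.pow_sub_le_descFactorial n r)

lemma choose_two_mul_mul_pow_le {r s n : ℕ} (hr : 1 ≤ r) (hrs : r ≤ s) (hn : s ≤ n) {x : ℝ}
    (hx0 : 0 ≤ x) (hx1 : x ≤ 1) :
    ((2 * n).choose s : ℝ) * (x ^ s * (1 - x) ^ (2 * n - s)) ≤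
      2 ^ s * s ^ s * (s - r)! * r ! * ((n.choose r : ℝ) * (x ^ r * (1 - x) ^ (n - r))) := by
  set k := s - r
  set m := n + r - s
  have hs : s = r + k := by omega
  have hsplit : x ^ s * (1 - x) ^ (2 * n - s) =
      x ^ k * (1 - x) ^ m * (x ^ r * (1 - x) ^ (n - r)) := by
    rw [show 2 * n - s = m + (n - r) by omega, hs]
    ring
  have hnm : (n : ℝ) ≤ s * m := by
    have : n ≤ s * m := by
      obtain ⟨a, rfl⟩ := Nat.exists_eq_add_of_le hn
      rw [show m = r + a by omega]
      nlinarith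
    exact_mod_cast this
  have htail : (n * x) ^ k * (1 - x) ^ m ≤ s ^ k * k ! :=
    calc (n * x) ^ k * (1 - x) ^ m ≤ (s * m * x) ^ k * (1 - x) ^ m := by gcongr
      _ = s ^ k * ((m * x) ^ k * (1 - x) ^ m) := by ring
      _ ≤ s ^ k * k ! := by gcongr; exact mul_pow_mul_one_sub_pow_le_factorial hx0 hx1 k m
  have hchoose₂ : ((2 * n).choose s : ℝ) ≤ 2 ^ s * n ^ r * n ^ k := by
    rw [mul_assoc, ← pow_add, ← hs, ← mul_pow]
    exact_mod_cast Nat.choose_le_pow _ _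
  have hchoose : (n : ℝ) ^ r ≤ s ^ r * (r ! * n.choose r) := by
    exact_mod_cast Nat.pow_le_pow_mul_factorial_mul_choose hrs hn
  rw [hsplit]
  calc ((2 * n).choose s : ℝ) * (x ^ k * (1 - x) ^ m * (x ^ r * (1 - x) ^ (n - r)))
      ≤ 2 ^ s * n ^ r * n ^ k * (x ^ k * (1 - x) ^ m * (x ^ r * (1 - x) ^ (n - r))) := by
        gcongr
    _ = 2 ^ s * n ^ r * ((n * x) ^ k * (1 - x) ^ m) * (x ^ r * (1 - x) ^ (n - r)) := by ring
    _ ≤ 2 ^ s * (s ^ r * (r ! * n.choose r)) * (s ^ k * k !) * (x ^ r * (1 - x) ^ (n - r)) := by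
        gcongr
    _ = 2 ^ s * s ^ s * k ! * r ! * ((n.choose r : ℝ) * (x ^ r * (1 - x) ^ (n - r))) := by
        rw [hs, pow_add]; ring

lemma Summable.pow_mul_one_sub_pow {ι : Type*} {p : ι → ℝ} (hp : Summable p)
    (hp0 : ∀ j, 0 ≤ p j) (hp1 : ∀ j, p j ≤ 1) {r : ℕ} (hr : r ≠ 0) (t : ℕ) :
    Summable fun j => p j ^ r * (1 - p j) ^ t :=
  hp.of_nonneg_of_le
    (fun j => mul_nonneg (pow_nonneg (hp0 j) r) (pow_nonneg (sub_nonneg.2 (hp1 j)) t))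
    (fun j => (mul_le_of_le_one_right (pow_nonneg (hp0 j) r)
      (pow_le_one₀ (sub_nonneg.2 (hp1 j)) (by linarith [hp0 j]))).trans
      (pow_le_of_le_one (hp0 j) (hp1 j) hr))

/-- Occupancy count comparison: for a probability mass function `(p j)` with
values in `(0,1)` and `κ n r := C(n,r) ∑_j p_j^r (1-p_j)^(n-r)`, for fixed
`1 ≤ r < s` there is a constant `c > 0` (depending only on `r`, `s`) with
`κ n r ≥ c * κ (2n) s` for all `n ≥ s`. -/
theorem occupancy_count_comparison
    (r s : ℕ) (hr : 1 ≤ r) (hrs : r < s) :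
    ∃ c : ℝ, 0 < c ∧
      ∀ (p : ℕ → ℝ), (∀ j, p j ∈ Ioo (0:ℝ) 1) → (∑' j : ℕ, p j) = 1 →
      ∀ (κ : ℕ → ℕ → ℝ),
        (∀ n m, κ n m = (n.choose m : ℝ) * ∑' j : ℕ, p j ^ m * (1 - p j) ^ (n - m)) →
        ∀ n, s ≤ n → c * κ (2 * n) s ≤ κ n r := by
  have hs : (0 : ℝ) < s := by exact_mod_cast (by omega : 0 < s)
  refine ⟨(2 ^ s * s ^ s * (s - r)! * r ! : ℝ)⁻¹, by positivity, ?_⟩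
  intro p hp hp_sum κ hκ n hn
  have hp0 j : 0 ≤ p j := (hp j).1.le
  have hp1 j : p j ≤ 1 := (hp j).2.le
  have hsummable : Summable p := by
    by_contra h
    simp [tsum_eq_zero_of_not_summable h] at hp_sum
  rw [hκ, hκ, inv_mul_le_iff₀ (by positivity), ← tsum_mul_left, ← tsum_mul_left,
    ← tsum_mul_left]
  exact Summable.tsum_le_tsum (fun j => choose_two_mul_mul_pow_le hr hrs.le hn (hp0 j) (hp1 j))
    ((hsummable.pow_mul_one_sub_pow hp0 hp1 (by omega) _).mul_left _)
    (((hsummable.pow_mul_one_sub_pow hp0 hp1 (by omega) _).mul_left _).mul_left _)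
end

section
/- For the beta(a,b) measure with 1 < a < 2, ν(dx) = (1/B(a,b)) x^{a-3}(1-x)^{b-1} dx, the first moment of the subordinator is m = E S_1 = ∫₀¹ |log(1-x)| ν(dx) = ((a+b-1)/((a-1)(2-a))) (1 − (a+b-2)(Ψ(a+b-1) − Ψ(b))), where Ψ is the digamma function. -/
/-!
Write `p = a - 2 ∈ (-1, 0)` and `L(x) = -log (1 - x)`. The integrand `x^(p-1) (1-x)^(b-1) L` is
too singular at `0` to be obtained by differentiating a beta integral, but
`x^p (1-x)^b L` vanishes at both ends of `(0, 1)`, so integrating its derivative gives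
`p ∫ x^(p-1) (1-x)^(b-1) L = (p + b) ∫ x^p (1-x)^(b-1) L - B(a-1, b)`.
The remaining integral is `-∂_b B(a-1, b) = B(a-1, b) (Ψ(a+b-1) - Ψ(b))`, by differentiating
under the integral sign, and `B(a, b) = (a-1)/(a+b-1) B(a-1, b)`.
-/

open MeasureTheory Set Real
open Filter Topology
open ProbabilityTheory (beta beta_pos)

namespace BetaCoalescent

variable {u v : ℝ}

lemma ofReal_rpow_mul_one_sub_rpow {x : ℝ} (hx : x ∈ Icc 0 1) :
    ((x ^ (u - 1) * (1 - x) ^ (v - 1) : ℝ) : ℂ)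
      = (x : ℂ) ^ (u - 1 : ℂ) * (1 - x : ℂ) ^ (v - 1 : ℂ) := by
  rw [Complex.ofReal_mul, Complex.ofReal_cpow hx.1, Complex.ofReal_cpow (sub_nonneg.2 hx.2)]
  push_cast
  rfl

lemma betaIntegral_ofReal :
    Complex.betaIntegral u v = ((∫ x in (0 : ℝ)..1, x ^ (u - 1) * (1 - x) ^ (v - 1) : ℝ) : ℂ) := by
  rw [Complex.betaIntegral, ← intervalIntegral.integral_ofReal]
  refine intervalIntegral.integral_congr fun x hx => ?_
  rw [uIcc_of_le zero_le_one] at hx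
  exact (ofReal_rpow_mul_one_sub_rpow hx).symm

lemma integrableOn_rpow_mul_one_sub_rpow (hu : 0 < u) (hv : 0 < v) :
    IntegrableOn (fun x : ℝ => x ^ (u - 1) * (1 - x) ^ (v - 1)) (Ioo 0 1) := by
  have hc := Complex.betaIntegral_convergent (u := u) (v := v)
    (by simpa using hu) (by simpa using hv)
  rw [intervalIntegrable_iff_integrableOn_Ioc_of_le zero_le_one] at hc
  have := ((hc.mono_set Ioo_subset_Ioc_self).congr_fun (fun x hx =>
    (ofReal_rpow_mul_one_sub_rpow (u := u) (v := v) (Ioo_subset_Icc_self hx)).symm)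
    measurableSet_Ioo).re
  simpa [IntegrableOn] using this

lemma integral_rpow_mul_one_sub_rpow (hu : 0 < u) (hv : 0 < v) :
    ∫ x in Ioo 0 1, x ^ (u - 1) * (1 - x) ^ (v - 1) = beta u v := by
  rw [ProbabilityTheory.beta_eq_betaIntegralReal u v hu hv, betaIntegral_ofReal,
    Complex.ofReal_re, intervalIntegral.integral_of_le zero_le_one, integral_Ioc_eq_integral_Ioo]

lemma neg_log_one_sub_nonneg {x : ℝ} (hx : x ∈ Icc 0 1) : 0 ≤ -log (1 - x) :=
  neg_nonneg.2 (log_nonpos (sub_nonneg.2 hx.2) (by linarith [hx.1]))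

lemma neg_log_one_sub_le {ε x : ℝ} (hε : 0 < ε) (hx : x ∈ Ioo 0 1) :
    -log (1 - x) ≤ (2 + 2 / ε) * (x * (1 - x) ^ (-ε)) := by
  obtain ⟨hx0, hx1⟩ := hx
  have h1x : 0 < 1 - x := by linarith
  have hpow : 1 ≤ (1 - x) ^ (-ε) :=
    one_le_rpow_of_pos_of_le_one_of_nonpos h1x (by linarith) (by linarith)
  have hsplit : (2 + 2 / ε) * (x * (1 - x) ^ (-ε)) =
      2 * x * (1 - x) ^ (-ε) + 2 * x * ((1 - x) ^ (-ε) / ε) := by ring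
  have hquot : 0 ≤ (1 - x) ^ (-ε) / ε := by positivity
  rw [hsplit]
  rcases le_or_gt x (1 / 2) with hx2 | hx2
  · have hlog : -log (1 - x) ≤ (1 - x)⁻¹ - 1 := by
      simpa [log_inv] using log_le_sub_one_of_pos (inv_pos.2 h1x)
    have hinv : (1 - x)⁻¹ - 1 ≤ 2 * x := by
      rw [inv_eq_one_div, div_sub_one h1x.ne', div_le_iff₀ h1x]
      nlinarith
    nlinarith [mul_le_mul_of_nonneg_left hpow hx0.le]
  · have hlog : -log (1 - x) ≤ (1 - x) ^ (-ε) / ε := by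
      have := log_le_rpow_div (inv_pos.2 h1x).le hε
      rwa [log_inv, inv_rpow h1x.le, ← rpow_neg h1x.le] at this
    nlinarith

lemma rpow_mul_one_sub_rpow_mul_neg_log_le {s t ε x : ℝ} (hε : 0 < ε) (hx : x ∈ Ioo 0 1) :
    x ^ s * (1 - x) ^ t * -log (1 - x) ≤ (2 + 2 / ε) * (x ^ (s + 1) * (1 - x) ^ (t - ε)) := by
  have hx0 : 0 < x := hx.1
  have h1x : 0 < 1 - x := sub_pos.2 hx.2
  calc x ^ s * (1 - x) ^ t * -log (1 - x)
      ≤ x ^ s * (1 - x) ^ t * ((2 + 2 / ε) * (x * (1 - x) ^ (-ε))) :=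
        mul_le_mul_of_nonneg_left (neg_log_one_sub_le hε hx) (by positivity)
    _ = (2 + 2 / ε) * (x ^ (s + 1) * (1 - x) ^ (t - ε)) := by
        rw [rpow_add_one hx0.ne', sub_eq_add_neg t, rpow_add h1x]
        ring

lemma integrableOn_rpow_mul_one_sub_rpow_mul_neg_log {s : ℝ} (hs : -2 < s) (hv : 0 < v) :
    IntegrableOn (fun x : ℝ => x ^ s * (1 - x) ^ (v - 1) * -log (1 - x)) (Ioo 0 1) := by
  have hdom := (integrableOn_rpow_mul_one_sub_rpow (u := s + 2) (v := v / 2)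
    (by linarith) (by linarith)).const_mul (2 + 2 / (v / 2))
  rw [show s + 2 - 1 = s + 1 by ring, show v / 2 - 1 = v - 1 - v / 2 by ring] at hdom
  refine hdom.mono' (by fun_prop) ?_
  filter_upwards [ae_restrict_mem measurableSet_Ioo] with x hx
  rw [norm_of_nonneg (mul_nonneg (mul_nonneg (rpow_nonneg hx.1.le _)
    (rpow_nonneg (sub_pos.2 hx.2).le _)) (neg_log_one_sub_nonneg (Ioo_subset_Icc_self hx)))]
  exact rpow_mul_one_sub_rpow_mul_neg_log_le (by linarith) hx

lemma hasDerivAt_integral_rpow_mul_one_sub_rpow (hu : 0 < u) (hv : 0 < v) :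
    HasDerivAt (fun t => ∫ x in Ioo 0 1, x ^ (u - 1) * (1 - x) ^ (t - 1))
      (∫ x in Ioo 0 1, x ^ (u - 1) * (1 - x) ^ (v - 1) * log (1 - x)) v := by
  refine (hasDerivAt_integral_of_dominated_loc_of_deriv_le (μ := volume.restrict (Ioo 0 1))
    (F := fun t x => x ^ (u - 1) * (1 - x) ^ (t - 1))
    (F' := fun t x => x ^ (u - 1) * (1 - x) ^ (t - 1) * log (1 - x))
    (bound := fun x => x ^ (u - 1) * (1 - x) ^ (v / 2 - 1) * -log (1 - x))
    (Ioi_mem_nhds (half_lt_self hv)) (.of_forall fun t => by fun_prop)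
    (integrableOn_rpow_mul_one_sub_rpow hu hv) (by fun_prop) ?_
    (integrableOn_rpow_mul_one_sub_rpow_mul_neg_log (by linarith) (half_pos hv)) ?_).2
  · filter_upwards [ae_restrict_mem measurableSet_Ioo] with x hx t (ht : v / 2 < t)
    have h1x : 0 < 1 - x := sub_pos.2 hx.2
    have hlog := neg_log_one_sub_nonneg (Ioo_subset_Icc_self hx)
    rw [norm_mul, norm_mul, norm_of_nonneg (rpow_nonneg hx.1.le _),
      norm_of_nonneg (rpow_nonneg h1x.le _), norm_eq_abs, abs_of_nonpos (neg_nonneg.1 hlog)]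
    have hmono := rpow_le_rpow_of_exponent_ge h1x (by linarith [hx.1])
      (by linarith : v / 2 - 1 ≤ t - 1)
    have hxu := rpow_nonneg hx.1.le (u - 1)
    gcongr
  · filter_upwards [ae_restrict_mem measurableSet_Ioo] with x hx t _
    simpa [mul_assoc] using ((hasStrictDerivAt_const_rpow (sub_pos.2 hx.2) (t - 1)).hasDerivAt
      |>.comp_sub_const t 1 |>.const_mul (x ^ (u - 1)))

lemma hasDerivAt_Gamma {s : ℝ} (hs : 0 < s) : HasDerivAt Gamma (deriv Gamma s) s :=
  (differentiableAt_Gamma fun m hm => by linarith [m.cast_nonneg (α := ℝ)]).hasDerivAt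

lemma hasDerivAt_beta_right (hu : 0 < u) (hv : 0 < v) :
    HasDerivAt (beta u) (beta u v * (logDeriv Gamma v - logDeriv Gamma (u + v))) v := by
  have hΓ : Gamma (u + v) ≠ 0 := (Gamma_pos_of_pos (add_pos hu hv)).ne'
  refine (((hasDerivAt_Gamma hv).const_mul (Gamma u)).div
    ((hasDerivAt_Gamma (add_pos hu hv)).comp_const_add u v) hΓ).congr_deriv ?_
  simp only [ProbabilityTheory.beta, logDeriv_apply]
  field_simp [(Gamma_pos_of_pos hv).ne']

lemma integral_rpow_mul_one_sub_rpow_mul_neg_log (hu : 0 < u) (hv : 0 < v) :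
    ∫ x in Ioo 0 1, x ^ (u - 1) * (1 - x) ^ (v - 1) * -log (1 - x)
      = beta u v * (logDeriv Gamma (u + v) - logDeriv Gamma v) := by
  have hderiv : HasDerivAt (beta u)
      (∫ x in Ioo 0 1, x ^ (u - 1) * (1 - x) ^ (v - 1) * log (1 - x)) v := by
    refine (hasDerivAt_integral_rpow_mul_one_sub_rpow hu hv).congr_of_eventuallyEq ?_
    filter_upwards [eventually_gt_nhds hv] with t ht
    exact (integral_rpow_mul_one_sub_rpow hu ht).symm
  simp_rw [mul_neg, integral_neg, hderiv.unique (hasDerivAt_beta_right hu hv)]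
  ring

lemma hasDerivAt_rpow_mul_one_sub_rpow_mul_neg_log {x : ℝ} (hx : x ∈ Ioo 0 1) :
    HasDerivAt (fun x => x ^ (u - 1) * (1 - x) ^ v * -log (1 - x))
      ((u - 1) * (x ^ (u - 2) * (1 - x) ^ (v - 1) * -log (1 - x))
        - (u + v - 1) * (x ^ (u - 1) * (1 - x) ^ (v - 1) * -log (1 - x))
        + x ^ (u - 1) * (1 - x) ^ (v - 1)) x := by
  obtain ⟨hx0, hx1⟩ := hx
  have h1x : 0 < 1 - x := sub_pos.2 hx1
  have hsub : HasDerivAt (fun x : ℝ => 1 - x) (-1) x := by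
    simpa using (hasDerivAt_id x).const_sub 1
  have hpow := (hasDerivAt_rpow_const (p := u - 1) (Or.inl hx0.ne')).mul
    ((hasDerivAt_rpow_const (p := v) (Or.inl h1x.ne')).comp x hsub)
  refine (hpow.mul ((hasDerivAt_log h1x.ne').comp x hsub).neg).congr_deriv ?_
  have e1 : (1 - x) ^ v = (1 - x) ^ (v - 1) * (1 - x) := by
    rw [← rpow_add_one h1x.ne', sub_add_cancel]
  have e2 : x ^ (u - 1) = x ^ (u - 2) * x := by
    rw [← rpow_add_one hx0.ne']; ring_nf
  simp only [Function.comp_apply, Pi.mul_apply, Pi.neg_apply, show u - 1 - 1 = u - 2 by ring]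
  rw [e1, e2]
  field_simp
  ring

lemma tendsto_rpow_mul_one_sub_rpow_mul_neg_log (hu : 0 < u) (hv : 0 < v) {a : ℝ}
    (ha : a = 0 ∨ a = 1) {l : Filter ℝ} (hla : l ≤ 𝓝 a) (hl : Ioo 0 1 ∈ l) :
    Tendsto (fun x => x ^ (u - 1) * (1 - x) ^ v * -log (1 - x)) l (𝓝 0) := by
  set G : ℝ → ℝ := fun x => (2 + 2 / (v / 2)) * (x ^ u * (1 - x) ^ (v / 2))
  have hG : Continuous G := by
    refine continuous_const.mul ((continuous_rpow_const (by linarith)).mul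
      ((continuous_rpow_const (by linarith)).comp (continuous_const.sub continuous_id)))
  have hGa : G a = 0 := by
    rcases ha with rfl | rfl <;> simp [G, zero_rpow hu.ne', zero_rpow (half_pos hv).ne']
  refine tendsto_of_tendsto_of_tendsto_of_le_of_le' tendsto_const_nhds
    (hGa ▸ (hG.tendsto a).mono_left hla) ?_ ?_
  · filter_upwards [hl] with x hx
    exact mul_nonneg (mul_nonneg (rpow_nonneg hx.1.le _) (rpow_nonneg (sub_pos.2 hx.2).le _))
      (neg_log_one_sub_nonneg (Ioo_subset_Icc_self hx))
  · filter_upwards [hl] with x hx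
    simpa only [sub_add_cancel, sub_half] using
      rpow_mul_one_sub_rpow_mul_neg_log_le (s := u - 1) (t := v) (half_pos hv) hx

lemma integral_rpow_mul_one_sub_rpow_mul_neg_log_recurrence (hu : 0 < u) (hv : 0 < v) :
    (u - 1) * ∫ x in Ioo 0 1, x ^ (u - 2) * (1 - x) ^ (v - 1) * -log (1 - x)
      = (u + v - 1) * (∫ x in Ioo 0 1, x ^ (u - 1) * (1 - x) ^ (v - 1) * -log (1 - x))
        - ∫ x in Ioo 0 1, x ^ (u - 1) * (1 - x) ^ (v - 1) := by
  have h1 := integrableOn_rpow_mul_one_sub_rpow_mul_neg_log (s := u - 2) (by linarith) hv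
  have h2 := integrableOn_rpow_mul_one_sub_rpow_mul_neg_log (s := u - 1) (by linarith) hv
  have h3 := integrableOn_rpow_mul_one_sub_rpow hu hv
  have hint := ((h1.const_mul (u - 1)).sub (h2.const_mul (u + v - 1))).add h3
  have hFTC := intervalIntegral.integral_eq_sub_of_hasDerivAt_of_tendsto zero_lt_one
    (fun x hx => hasDerivAt_rpow_mul_one_sub_rpow_mul_neg_log hx)
    ((intervalIntegrable_iff_integrableOn_Ioo_of_le zero_le_one).2 hint)
    (tendsto_rpow_mul_one_sub_rpow_mul_neg_log hu hv (.inl rfl) nhdsWithin_le_nhds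
      (Ioo_mem_nhdsGT zero_lt_one))
    (tendsto_rpow_mul_one_sub_rpow_mul_neg_log hu hv (.inr rfl) nhdsWithin_le_nhds
      (Ioo_mem_nhdsLT zero_lt_one))
  rw [intervalIntegral.integral_of_le zero_le_one, integral_Ioc_eq_integral_Ioo,
    integral_add ?_ h3, integral_sub (h1.const_mul _) (h2.const_mul _), integral_const_mul,
    integral_const_mul] at hFTC
  · linarith
  · exact (h1.const_mul _).sub (h2.const_mul _)

lemma beta_add_one_left (hu : u ≠ 0) (huv : u + v ≠ 0) :
    beta (u + 1) v = u / (u + v) * beta u v := by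
  simp only [ProbabilityTheory.beta]
  rw [Gamma_add_one hu, add_right_comm, Gamma_add_one huv, mul_assoc, mul_div_mul_comm]

end BetaCoalescent

open BetaCoalescent in
/-- For the beta(a,b) measure with `1 < a < 2`,
`ν(dx) = x^(a-3)(1-x)^(b-1) dx / B(a,b)`, the first moment of the associated
subordinator is
`m = ∫₀¹ |log(1-x)| ν(dx)
   = ((a+b-1)/((a-1)(2-a))) (1 - (a+b-2)(Ψ(a+b-1) - Ψ(b)))`,
where `Ψ = Γ'/Γ` is the digamma function and `B` the beta function. -/
theorem beta_coalescent_mean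
    (a b : ℝ) (ha : 1 < a) (ha2 : a < 2) (hb : 0 < b)
    (B : ℝ) (hB : B = Real.Gamma a * Real.Gamma b / Real.Gamma (a + b))
    (Ψ : ℝ → ℝ) (hΨ : ∀ x, 0 < x → Ψ x = deriv Real.Gamma x / Real.Gamma x) :
    ∫ x in Ioo (0:ℝ) 1, |Real.log (1 - x)| * (x ^ (a - 3) * (1 - x) ^ (b - 1) / B)
      = ((a + b - 1) / ((a - 1) * (2 - a)))
          * (1 - (a + b - 2) * (Ψ (a + b - 1) - Ψ b)) := by
  have hu : 0 < a - 1 := sub_pos.2 ha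
  have hB' : B = (a - 1) / (a + b - 1) * beta (a - 1) b := by
    rw [hB, show a + b - 1 = a - 1 + b by ring, ← beta_add_one_left hu.ne' (by linarith),
      sub_add_cancel]
    rfl
  have hlhs : ∫ x in Ioo (0:ℝ) 1, |log (1 - x)| * (x ^ (a - 3) * (1 - x) ^ (b - 1) / B)
      = (∫ x in Ioo 0 1, x ^ (a - 1 - 2) * (1 - x) ^ (b - 1) * -log (1 - x)) / B := by
    rw [← integral_div]
    refine setIntegral_congr_fun measurableSet_Ioo fun x hx => ?_
    rw [abs_of_nonpos (neg_nonneg.1 (neg_log_one_sub_nonneg (Ioo_subset_Icc_self hx))),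
      show a - 1 - 2 = a - 3 by ring]
    ring
  have hrec := integral_rpow_mul_one_sub_rpow_mul_neg_log_recurrence hu hb
  rw [integral_rpow_mul_one_sub_rpow_mul_neg_log hu hb, integral_rpow_mul_one_sub_rpow hu hb,
    show a - 1 + b = a + b - 1 by ring] at hrec
  rw [hlhs, hΨ _ (by linarith), hΨ b hb, ← logDeriv_apply, ← logDeriv_apply, hB']
  have hβ := beta_pos hu hb
  have h2a : 2 - a ≠ 0 := by linarith
  have hab : a + b - 1 ≠ 0 := by linarith
  generalize ∫ x in Ioo 0 1, x ^ (a - 1 - 2) * (1 - x) ^ (b - 1) * -log (1 - x) = I at hrec ⊢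
  field_simp
  linear_combination -hrec
end

section
/- For the beta(2,b) measure ν(dx) = (1/B(2,b)) x^{-1}(1-x)^{b-1} dx with b > 0, the mean and variance of S_1 equal m = b(b+1) ζ(2,b) and s² = 2 b(b+1) ζ(3,b), where ζ(·,b) is the Hurwitz zeta function. -/
/-!
Substituting `x = 1 - e^{-t}` turns `∫₀¹ |log(1-x)|^s x⁻¹ (1-x)^(b-1) dx` into
`∫₀^∞ t^s e^{-bt} / (1 - e^{-t}) dt`. Expanding `1/(1 - e^{-t})` as a geometric series and
integrating termwise, `∫₀^∞ t^s e^{-(n+b)t} dt = Γ(s+1) (n+b)^{-(s+1)}`, so the integral is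
`Γ(s+1) ζ(s+1, b)`; the cases `s = 1, 2` give `ζ(2,b)` and `2 ζ(3,b)`.
-/

open MeasureTheory Set Real

theorem image_one_sub_exp_neg_Ioi : (fun t => 1 - exp (-t)) '' Ioi 0 = Ioo 0 1 := by
  ext x
  constructor
  · rintro ⟨t, ht, rfl⟩
    have : exp (-t) < 1 := exp_lt_one_iff.2 (neg_neg_of_pos ht)
    exact ⟨by linarith, by linarith [exp_pos (-t)]⟩
  · rintro ⟨hx0, hx1⟩
    refine ⟨-log (1 - x), neg_pos.2 (log_neg (by linarith) (by linarith)), ?_⟩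
    simp [exp_log (by linarith : 0 < 1 - x)]

theorem integral_Ioo_zero_one_eq_integral_Ioi_exp_neg {E : Type*} [NormedAddCommGroup E]
    [NormedSpace ℝ E] (g : ℝ → E) :
    ∫ x in Ioo 0 1, g x = ∫ t in Ioi 0, exp (-t) • g (1 - exp (-t)) := by
  have hderiv (t : ℝ) : HasDerivAt (fun t => 1 - exp (-t)) (exp (-t)) t := by
    simpa using ((hasDerivAt_neg t).exp).const_sub 1
  have hmono : StrictMono fun t => 1 - exp (-t) := fun x y hxy => by
    simpa using exp_lt_exp.2 (neg_lt_neg hxy)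
  rw [← image_one_sub_exp_neg_Ioi, integral_image_eq_integral_abs_deriv_smul measurableSet_Ioi
    (fun t _ => (hderiv t).hasDerivWithinAt) hmono.injective.injOn]
  simp_rw [abs_of_pos (exp_pos _)]

theorem tsum_exp_neg_nat_add_mul {t : ℝ} (ht : 0 < t) (b : ℝ) :
    ∑' n : ℕ, exp (-((n + b) * t)) = exp (-(b * t)) / (1 - exp (-t)) := by
  have hr : exp (-t) < 1 := exp_lt_one_iff.2 (neg_neg_of_pos ht)
  rw [div_eq_mul_inv, ← tsum_geometric_of_lt_one (exp_pos _).le hr, ← tsum_mul_left]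
  refine tsum_congr fun n => ?_
  rw [← exp_nat_mul, ← exp_add]
  ring_nf

theorem summable_nat_add_rpow_neg {b s : ℝ} (hb : 0 < b) (hs : 1 < s) :
    Summable fun n : ℕ => ((n : ℝ) + b) ^ (-s) := by
  refine ((summable_one_div_nat_add_rpow b s).2 hs).congr fun n => ?_
  have : 0 < (n : ℝ) + b := by positivity
  rw [abs_of_pos this, rpow_neg this.le, one_div]

theorem integrableOn_rpow_mul_exp_neg_mul {s c : ℝ} (hs : -1 < s) (hc : 0 < c) :
    IntegrableOn (fun t => t ^ s * exp (-(c * t))) (Ioi 0) := by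
  refine (integrableOn_rpow_mul_exp_neg_mul_rpow hs one_pos hc).congr_fun (fun t _ => ?_)
    measurableSet_Ioi
  simp [neg_mul]

theorem integral_Ioi_rpow_mul_exp_neg_mul {s c : ℝ} (hs : -1 < s) (hc : 0 < c) :
    ∫ t in Ioi 0, t ^ s * exp (-(c * t)) = Gamma (s + 1) * c ^ (-(s + 1)) := by
  have h := integral_rpow_mul_exp_neg_mul_Ioi (a := s + 1) (by linarith) hc
  rw [add_sub_cancel_right] at h
  rw [h, mul_comm, one_div, inv_rpow hc.le, rpow_neg hc.le]

theorem integral_tsum_rpow_mul_exp_neg_nat_add_mul {b s : ℝ} (hb : 0 < b) (hs : 0 < s) :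
    ∫ t in Ioi 0, ∑' n : ℕ, t ^ s * exp (-((n + b) * t))
      = Gamma (s + 1) * ∑' n : ℕ, ((n : ℝ) + b) ^ (-(s + 1)) := by
  have hpos (n : ℕ) : 0 < (n : ℝ) + b := by positivity
  have hint (n : ℕ) := integral_Ioi_rpow_mul_exp_neg_mul (by linarith) (hpos n)
  have hnorm (n : ℕ) : ∫ t in Ioi 0, ‖t ^ s * exp (-((n + b) * t))‖
      = Gamma (s + 1) * ((n : ℝ) + b) ^ (-(s + 1)) := by
    rw [← hint n]
    refine setIntegral_congr_fun measurableSet_Ioi fun t (ht : 0 < t) => ?_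
    exact norm_of_nonneg (by positivity)
  rw [← integral_tsum_of_summable_integral_norm
      (fun n => integrableOn_rpow_mul_exp_neg_mul (by linarith) (hpos n)), tsum_congr hint,
    tsum_mul_left]
  simp_rw [hnorm]
  exact (summable_nat_add_rpow_neg hb (by linarith)).mul_left _

theorem exp_neg_mul_beta_density_eq_tsum {t : ℝ} (ht : 0 < t) (s b : ℝ) :
    exp (-t) • (|log (1 - (1 - exp (-t)))| ^ s *
        ((1 - exp (-t))⁻¹ * (1 - (1 - exp (-t))) ^ (b - 1)))
      = ∑' n : ℕ, t ^ s * exp (-((n + b) * t)) := by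
  rw [tsum_mul_left, tsum_exp_neg_nat_add_mul ht, sub_sub_cancel, log_exp, abs_neg,
    abs_of_pos ht, ← exp_mul, smul_eq_mul, div_eq_mul_inv]
  have : -(b * t) = -t + -t * (b - 1) := by ring
  rw [this, exp_add]
  ring

theorem integral_abs_log_one_sub_rpow_mul_beta_density {b s : ℝ} (hb : 0 < b) (hs : 0 < s) :
    ∫ x in Ioo 0 1, |log (1 - x)| ^ s * (x⁻¹ * (1 - x) ^ (b - 1))
      = Gamma (s + 1) * ∑' n : ℕ, ((n : ℝ) + b) ^ (-(s + 1)) := by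
  rw [integral_Ioo_zero_one_eq_integral_Ioi_exp_neg,
    setIntegral_congr_fun measurableSet_Ioi
      fun t (ht : 0 < t) => exp_neg_mul_beta_density_eq_tsum ht s b,
    integral_tsum_rpow_mul_exp_neg_nat_add_mul hb hs]

/-- For the beta(2,b) measure `ν(dx) = (1/B(2,b)) x⁻¹ (1-x)^(b-1) dx`, the mean
and variance of `S₁` are `m = b(b+1) ζ(2,b)` and `s² = 2 b(b+1) ζ(3,b)`, with
`ζ(s,b) = ∑_{n≥0} (n+b)^{-s}` the Hurwitz zeta function. Equivalently,
`∫₀¹ |log(1-x)| x⁻¹ (1-x)^(b-1) dx = ζ(2,b)` and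
`∫₀¹ |log(1-x)|² x⁻¹ (1-x)^(b-1) dx = 2 ζ(3,b)`. -/
theorem beta_two_b_mean_variance
    (b : ℝ) (hb : 0 < b)
    (ζ : ℝ → ℝ) (hζ : ∀ s : ℝ, 1 < s → ζ s = ∑' n : ℕ, ((n : ℝ) + b) ^ (-s)) :
    (∫ x in Ioo (0:ℝ) 1, |Real.log (1 - x)| * (x⁻¹ * (1 - x) ^ (b - 1)) = ζ 2)
    ∧ (∫ x in Ioo (0:ℝ) 1, |Real.log (1 - x)| ^ 2 * (x⁻¹ * (1 - x) ^ (b - 1))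
        = 2 * ζ 3) := by
  constructor
  · rw [hζ 2 one_lt_two]
    simpa [one_add_one_eq_two] using integral_abs_log_one_sub_rpow_mul_beta_density hb one_pos
  · rw [hζ 3 (by norm_num)]
    simpa [two_add_one_eq_three] using integral_abs_log_one_sub_rpow_mul_beta_density hb two_pos
end

section
/- For the measure ν(dx) = x^{a-2} dx / ((1-x)|log(1-x)|^d) with d ∈ (2,3) and a ∈ (d, d+1): (i) ∫₀¹ x ν(dx) < ∞; (ii) the tail ν̄(x) := ν([x,1)) is regularly varying at 0 with index −(d+1−a) ∈ (−1,0); (iii) ν̄(1−e^{−y}) ~ y^{−(d−1)}/(d−1) as y → ∞. -/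
open MeasureTheory Set Real Filter

noncomputable def nuL (t : ℝ) : ℝ := -Real.log (1 - t)
noncomputable def nuh (d : ℝ) (t : ℝ) : ℝ := (1 - t)⁻¹ * nuL t ^ (-d)
noncomputable def nuf (a d : ℝ) (t : ℝ) : ℝ := t ^ (a - 2) * ((1 - t)⁻¹ * nuL t ^ (-d))
noncomputable def nuH (d : ℝ) (t : ℝ) : ℝ := -(nuL t ^ (1 - d)) / (d - 1)

lemma nuL_pos {t : ℝ} (ht : t ∈ Ioo (0:ℝ) 1) : 0 < nuL t := by
  have h1 : (0:ℝ) < 1 - t := by linarith [ht.2]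
  have h2 : Real.log (1 - t) < 0 := Real.log_neg h1 (by linarith [ht.1])
  simpa [nuL] using h2

lemma nuL_ge {t : ℝ} (ht : t ∈ Ioo (0:ℝ) 1) : t ≤ nuL t := by
  have h1 : (0:ℝ) < 1 - t := by linarith [ht.2]
  have := Real.log_le_sub_one_of_pos h1
  simp only [nuL]; linarith

lemma nuH_hasDeriv {d : ℝ} (hd : 2 < d) {t : ℝ} (ht : t ∈ Ioo (0:ℝ) 1) :
    HasDerivAt (nuH d) (nuh d t) t := by
  have h1 : (0:ℝ) < 1 - t := by linarith [ht.2]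
  have hL : 0 < nuL t := nuL_pos ht
  have hsub : HasDerivAt (fun t : ℝ => 1 - t) (-1) t := by
    simpa using (hasDerivAt_id t).const_sub 1
  have hlog : HasDerivAt (fun t : ℝ => Real.log (1 - t)) (-1 / (1 - t)) t :=
    hsub.log h1.ne'
  have hLd : HasDerivAt nuL (1 / (1 - t)) t := by
    have := hlog.neg
    exact this.congr_deriv (by ring)
  have hpow : HasDerivAt (fun t : ℝ => nuL t ^ (1 - d))
      ((1 - d) * nuL t ^ (1 - d - 1) * (1 / (1 - t))) t := by
    have := (hLd.rpow_const (p := 1 - d) (Or.inl hL.ne'))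
    convert this using 1
    ring
  have : HasDerivAt (nuH d)
      (-((1 - d) * nuL t ^ (1 - d - 1) * (1 / (1 - t))) / (d - 1)) t := by
    exact (hpow.neg).div_const (d - 1)
  convert this using 1
  have hd1 : d - 1 ≠ 0 := by intro h; nlinarith
  have he : (1 : ℝ) - d - 1 = -d := by ring
  rw [he]
  rw [nuh]; field_simp
  ring



lemma nuH_one {d : ℝ} (hd : 2 < d) : nuH d 1 = 0 := by
  have : (1:ℝ) - d ≠ 0 := by intro h; nlinarith
  simp [nuH, nuL, Real.zero_rpow this]

lemma nuH_contOn {d : ℝ} (hd : 2 < d) {x : ℝ} (hx : x ∈ Ioo (0:ℝ) 1) :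
    ContinuousOn (nuH d) (Icc x 1) := by
  intro t ht
  rcases eq_or_lt_of_le ht.2 with h1 | h1
  · subst h1
    have hlim : Tendsto (nuH d) (nhdsWithin 1 (Iio 1)) (nhds 0) := by
      have h1 : Tendsto (fun t : ℝ => 1 - t) (nhdsWithin 1 (Iio 1))
          (nhdsWithin 0 (Ioi 0)) := by
        apply tendsto_nhdsWithin_of_tendsto_nhds_of_eventually_within
        · have h0 : Tendsto (fun t : ℝ => 1 - t) (nhds 1) (nhds 0) := by
            have := Continuous.tendsto (f := fun t : ℝ => 1 - t) (by fun_prop) 1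
            simpa using this
          exact h0.mono_left nhdsWithin_le_nhds
        · filter_upwards [self_mem_nhdsWithin] with t ht
          simp only [mem_Iio] at ht
          simp [mem_Ioi]; linarith
      have h2 : Tendsto nuL (nhdsWithin 1 (Iio 1)) atTop := by
        have h2' := Real.tendsto_log_nhdsGT_zero.comp h1
        rw [show nuL = fun t => -(Real.log ∘ (fun t : ℝ => 1 - t)) t by
          funext t; simp [nuL, Function.comp]]
        exact tendsto_neg_atTop_iff.mpr h2'
      have h3 : Tendsto (fun y : ℝ => y ^ (1 - d)) atTop (nhds 0) := by
        have := tendsto_rpow_neg_atTop (y := d - 1) (by linarith)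
        convert this using 2 with y
        ring_nf
      have := (h3.comp h2).neg.div_const (d - 1)
      rw [neg_zero, zero_div] at this
      exact this
    unfold ContinuousWithinAt
    rw [nuH_one hd]
    have hsub : Icc x 1 ⊆ insert 1 (Iio 1) := by
      rw [Iio_insert]; exact Icc_subset_Iic_self
    refine Tendsto.mono_left ?_ (nhdsWithin_mono _ hsub)
    rw [nhdsWithin_insert]
    rw [tendsto_sup]
    constructor
    · have := tendsto_pure_nhds (nuH d) 1
      rwa [nuH_one hd] at this
    · exact hlim
  · have hx0 : 0 < t := lt_of_lt_of_le hx.1 ht.1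
    have hL : 0 < nuL t := nuL_pos ⟨hx0, h1⟩
    apply ContinuousAt.continuousWithinAt
    have hc1 : ContinuousAt (fun t : ℝ => 1 - t) t := by fun_prop
    have hc2 : ContinuousAt nuL t := by
      have : ContinuousAt (fun t : ℝ => Real.log (1 - t)) t :=
        (Real.continuousAt_log (by linarith)).comp hc1
      exact this.neg
    have hc3 : ContinuousAt (fun t => nuL t ^ (1 - d)) t :=
      (Real.continuousAt_rpow_const _ _ (Or.inl hL.ne')).comp hc2
    exact (hc3.neg).div_const _


lemma nuh_nonneg {d : ℝ} {t : ℝ} (ht : t ∈ Ioo (0:ℝ) 1) : 0 ≤ nuh d t := by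
  have h1 : (0:ℝ) < 1 - t := by linarith [ht.2]
  exact mul_nonneg (inv_nonneg.2 h1.le) (Real.rpow_nonneg (nuL_pos ht).le _)

lemma nuh_integrableOn_Ioc {d : ℝ} (hd : 2 < d) {x : ℝ} (hx : x ∈ Ioo (0:ℝ) 1) :
    IntegrableOn (nuh d) (Ioc x 1) := by
  apply intervalIntegral.integrableOn_deriv_of_nonneg (nuH_contOn hd hx)
  · intro t ht
    exact nuH_hasDeriv hd ⟨lt_trans hx.1 ht.1, ht.2⟩
  · intro t ht
    exact (nuh_nonneg ⟨lt_trans hx.1 ht.1, ht.2⟩)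

lemma nuh_integrableOn {d : ℝ} (hd : 2 < d) {x : ℝ} (hx : x ∈ Ioo (0:ℝ) 1) :
    IntegrableOn (nuh d) (Ioo x 1) :=
  (nuh_integrableOn_Ioc hd hx).mono_set Ioo_subset_Ioc_self

lemma nuh_integral {d : ℝ} (hd : 2 < d) {x : ℝ} (hx : x ∈ Ioo (0:ℝ) 1) :
    ∫ t in Ioo x 1, nuh d t = nuL x ^ (1 - d) / (d - 1) := by
  have hle : x ≤ 1 := hx.2.le
  have hii : IntervalIntegrable (nuh d) volume x 1 := by
    rw [intervalIntegrable_iff, uIoc_of_le hle]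
    exact nuh_integrableOn_Ioc hd hx
  have hftc := intervalIntegral.integral_eq_sub_of_hasDeriv_right_of_le hle
    (nuH_contOn hd hx)
    (fun t ht => (nuH_hasDeriv hd ⟨lt_trans hx.1 ht.1, ht.2⟩).hasDerivWithinAt)
    hii
  rw [intervalIntegral.integral_of_le hle, integral_Ioc_eq_integral_Ioo] at hftc
  rw [hftc, nuH_one hd, nuH]
  ring


lemma nuf_eq_mul_nuh (a d t : ℝ) : nuf a d t = t ^ (a - 2) * nuh d t := rfl

lemma nuf_contOn (a d : ℝ) : ContinuousOn (nuf a d) (Ioo (0:ℝ) 1) := by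
  intro t ht
  have h1 : (0:ℝ) < 1 - t := by linarith [ht.2]
  have hL : 0 < nuL t := nuL_pos ht
  apply ContinuousAt.continuousWithinAt
  have hc1 : ContinuousAt (fun t : ℝ => t ^ (a - 2)) t :=
    Real.continuousAt_rpow_const _ _ (Or.inl ht.1.ne')
  have hcL : ContinuousAt nuL t := by
    have hc : ContinuousAt (fun t : ℝ => 1 - t) t := by fun_prop
    exact ((Real.continuousAt_log h1.ne').comp hc).neg
  have hc2 : ContinuousAt (fun t : ℝ => (1 - t)⁻¹) t := by
    have : ContinuousAt (fun t : ℝ => 1 - t) t := by fun_prop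
    exact this.inv₀ h1.ne'
  have hc3 : ContinuousAt (fun t => nuL t ^ (-d)) t :=
    (Real.continuousAt_rpow_const _ _ (Or.inl hL.ne')).comp hcL
  exact hc1.mul (hc2.mul hc3)

lemma nuf_nonneg {a d t : ℝ} (ht : t ∈ Ioo (0:ℝ) 1) : 0 ≤ nuf a d t :=
  mul_nonneg (Real.rpow_nonneg ht.1.le _) (nuh_nonneg ht)

lemma nuf_le_nuh {a d t : ℝ} (ha : 2 ≤ a) (ht : t ∈ Ioo (0:ℝ) 1) :
    nuf a d t ≤ nuh d t := by
  rw [nuf_eq_mul_nuh]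
  have h1 : t ^ (a - 2) ≤ 1 :=
    Real.rpow_le_one ht.1.le ht.2.le (by linarith)
  nlinarith [nuh_nonneg (d := d) ht, Real.rpow_nonneg ht.1.le (a - 2)]

lemma nuf_integrableOn {a d : ℝ} (hd : 2 < d) (ha : 2 ≤ a) {x : ℝ}
    (hx : x ∈ Ioo (0:ℝ) 1) : IntegrableOn (nuf a d) (Ioo x 1) := by
  have hmeas : AEStronglyMeasurable (nuf a d) (volume.restrict (Ioo x 1)) :=
    ((nuf_contOn a d).mono (Ioo_subset_Ioo_left hx.1.le)).aestronglyMeasurable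
      measurableSet_Ioo
  refine Integrable.mono (nuh_integrableOn hd hx) hmeas ?_
  rw [ae_restrict_iff' measurableSet_Ioo]
  filter_upwards with t ht
  have ht' : t ∈ Ioo (0:ℝ) 1 := ⟨lt_trans hx.1 ht.1, ht.2⟩
  rw [Real.norm_eq_abs, Real.norm_eq_abs, abs_of_nonneg (nuf_nonneg ht'),
    abs_of_nonneg (nuh_nonneg ht')]
  exact nuf_le_nuh ha ht'

-- part (i)
lemma part_i {a d : ℝ} (hd : 2 < d) (ha1 : d < a) (ha2 : a < d + 1) :
    IntegrableOn (fun t => t * nuf a d t) (Ioo (0:ℝ) 1) := by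
  have ha : 2 ≤ a := by linarith
  have hmeas : AEStronglyMeasurable (fun t => t * nuf a d t)
      (volume.restrict (Ioo (0:ℝ) 1)) :=
    (continuousOn_id.mul (nuf_contOn a d)).aestronglyMeasurable measurableSet_Ioo
  have hsub : Ioo (0:ℝ) 1 ⊆ Ioo (0:ℝ) (2/3) ∪ Ioo (1/2 : ℝ) 1 := by
    intro t ht
    by_cases h : t < 2/3
    · exact Or.inl ⟨ht.1, h⟩
    · exact Or.inr ⟨by linarith [not_lt.mp h], ht.2⟩
  apply IntegrableOn.mono_set _ hsub
  apply IntegrableOn.union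
  · -- near 0 : bound by 3 * t^(a-1-d)
    have hrint : IntegrableOn (fun t : ℝ => 3 * t ^ (a - 1 - d)) (Ioo (0:ℝ) (2/3)) := by
      have h1 : IntervalIntegrable (fun t : ℝ => t ^ (a - 1 - d)) volume 0 (2/3) :=
        intervalIntegral.intervalIntegrable_rpow' (by linarith)
      rw [intervalIntegrable_iff, uIoc_of_le (by norm_num : (0:ℝ) ≤ 2/3)] at h1
      exact (h1.mono_set Ioo_subset_Ioc_self).const_mul 3
    refine Integrable.mono hrint (hmeas.mono_set (by
      intro t ht; exact ⟨ht.1, by linarith [ht.2]⟩)) ?_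
    rw [ae_restrict_iff' measurableSet_Ioo]
    filter_upwards with t ht
    have ht' : t ∈ Ioo (0:ℝ) 1 := ⟨ht.1, by linarith [ht.2]⟩
    have h1 : (0:ℝ) < 1 - t := by linarith [ht'.2]
    have hL : 0 < nuL t := nuL_pos ht'
    have hLt : t ≤ nuL t := nuL_ge ht'
    have hb1 : nuL t ^ (-d) ≤ t ^ (-d) := by
      rw [Real.rpow_neg hL.le, Real.rpow_neg ht.1.le]
      apply inv_anti₀ (Real.rpow_pos_of_pos ht.1 d)
      exact Real.rpow_le_rpow ht.1.le hLt (by linarith)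
    have hb2 : (1 - t)⁻¹ ≤ 3 := by
      rw [inv_le_comm₀ (by linarith [ht.2]) (by norm_num)]
      linarith [ht.2]
    have hnn := nuf_nonneg (a := a) (d := d) ht'
    rw [Real.norm_eq_abs, Real.norm_eq_abs,
      abs_of_nonneg (mul_nonneg ht.1.le hnn)]
    have key : t * nuf a d t ≤ 3 * t ^ (a - 1 - d) := by
      have e1 : t * nuf a d t = (t * t ^ (a-2)) * ((1-t)⁻¹ * nuL t ^ (-d)) := by
        rw [nuf]; ring
      have e2 : t * t ^ (a - 2) = t ^ (a - 1) := by
        nth_rewrite 1 [← Real.rpow_one t]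
        rw [← Real.rpow_add ht.1]; ring_nf
      have e3 : t ^ (a-1) * t ^ (-d) = t ^ (a - 1 - d) := by
        rw [← Real.rpow_add ht.1]; ring_nf
      rw [e1, e2]
      calc t ^ (a-1) * ((1-t)⁻¹ * nuL t ^ (-d))
          ≤ t ^ (a-1) * (3 * t ^ (-d)) := by
            apply mul_le_mul_of_nonneg_left _ (Real.rpow_nonneg ht.1.le _)
            apply mul_le_mul hb2 hb1 (Real.rpow_nonneg hL.le _) (by norm_num)
        _ = 3 * t ^ (a - 1 - d) := by rw [← e3]; ring
    calc t * nuf a d t ≤ 3 * t ^ (a-1-d) := key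
      _ ≤ |3 * t ^ (a-1-d)| := le_abs_self _
  · -- near 1: bound by nuh
    have hint : IntegrableOn (nuh d) (Ioo (1/2:ℝ) 1) :=
      nuh_integrableOn hd (by norm_num)
    refine Integrable.mono hint (hmeas.mono_set (by
      intro t ht; exact ⟨by linarith [ht.1], ht.2⟩)) ?_
    rw [ae_restrict_iff' measurableSet_Ioo]
    filter_upwards with t ht
    have ht' : t ∈ Ioo (0:ℝ) 1 := ⟨by linarith [ht.1], ht.2⟩
    have hnn := nuf_nonneg (a := a) (d := d) ht'
    rw [Real.norm_eq_abs, Real.norm_eq_abs,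
      abs_of_nonneg (mul_nonneg (by linarith [ht'.1] : (0:ℝ) ≤ t) hnn),
      abs_of_nonneg (nuh_nonneg ht')]
    calc t * nuf a d t ≤ 1 * nuf a d t := by
          apply mul_le_mul_of_nonneg_right ht'.2.le hnn
      _ = nuf a d t := one_mul _
      _ ≤ nuh d t := nuf_le_nuh (by linarith) ht'


lemma nuf_integral_bounds {a d : ℝ} (hd : 2 < d) (ha : 2 ≤ a) {x : ℝ}
    (hx : x ∈ Ioo (0:ℝ) 1) :
    x ^ (a-2) * (nuL x ^ (1-d) / (d-1)) ≤ (∫ t in Ioo x 1, nuf a d t) ∧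
    (∫ t in Ioo x 1, nuf a d t) ≤ nuL x ^ (1-d) / (d-1) := by
  constructor
  · rw [← nuh_integral hd hx, ← MeasureTheory.integral_const_mul]
    apply setIntegral_mono_on ((nuh_integrableOn hd hx).const_mul _)
      (nuf_integrableOn hd ha hx) measurableSet_Ioo
    intro t ht
    have ht' : t ∈ Ioo (0:ℝ) 1 := ⟨lt_trans hx.1 ht.1, ht.2⟩
    rw [nuf]
    apply mul_le_mul_of_nonneg_right _ (by
      exact nuh_nonneg (d := d) ht')
    exact Real.rpow_le_rpow hx.1.le ht.1.le (by linarith)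
  · rw [← nuh_integral hd hx]
    apply setIntegral_mono_on (nuf_integrableOn hd ha hx)
      (nuh_integrableOn hd hx) measurableSet_Ioo
    intro t ht
    exact nuf_le_nuh ha ⟨lt_trans hx.1 ht.1, ht.2⟩

lemma part_iii {a d : ℝ} (hd1 : 2 < d) (hd2 : d < 3) (ha1 : d < a) (ha2 : a < d + 1)
    (nubar : ℝ → ℝ)
    (hnubar : ∀ x ∈ Ioo (0:ℝ) 1, nubar x = ∫ t in Ioo x 1, nuf a d t) :
    Tendsto (fun y : ℝ => nubar (1 - Real.exp (-y)) / (y ^ (-(d - 1)) / (d - 1)))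
        atTop (nhds 1) := by
  have ha : 2 ≤ a := by linarith
  have hdpos : (0:ℝ) < d - 1 := by linarith
  -- lower and upper squeeze
  have hglim : Tendsto (fun y : ℝ => (1 - Real.exp (-y)) ^ (a - 2)) atTop (nhds 1) := by
    have h1 : Tendsto (fun y : ℝ => 1 - Real.exp (-y)) atTop (nhds 1) := by
      have := Real.tendsto_exp_neg_atTop_nhds_zero
      have := (tendsto_const_nhds (x := (1:ℝ)) (f := atTop)).sub this
      simpa using this
    have h2 : ContinuousAt (fun s : ℝ => s ^ (a - 2)) 1 :=
      Real.continuousAt_rpow_const _ _ (Or.inl one_ne_zero)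
    have := h2.tendsto.comp h1
    simpa [Real.one_rpow, Function.comp_def] using this
  apply tendsto_of_tendsto_of_tendsto_of_le_of_le' hglim tendsto_const_nhds
  · -- lower bound eventually
    filter_upwards [eventually_gt_atTop 0] with y hy
    have hexp : Real.exp (-y) < 1 := Real.exp_lt_one_iff.mpr (by linarith)
    have hx : (1 - Real.exp (-y)) ∈ Ioo (0:ℝ) 1 := by
      constructor
      · linarith
      · linarith [Real.exp_pos (-y)]
    have hLval : nuL (1 - Real.exp (-y)) = y := by
      simp [nuL, Real.log_exp]
    have hbd := (nuf_integral_bounds hd1 ha hx).1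
    rw [hnubar _ hx]
    rw [le_div_iff₀ (by positivity)]
    have hyd : y ^ (-(d-1)) = y ^ (1 - d) := by ring_nf
    rw [hyd]
    calc (1 - Real.exp (-y)) ^ (a-2) * (y ^ (1-d) / (d-1))
        = (1 - Real.exp (-y)) ^ (a-2) * (nuL (1 - Real.exp (-y)) ^ (1-d) / (d-1)) := by
          rw [hLval]
      _ ≤ ∫ t in Ioo (1 - Real.exp (-y)) 1, nuf a d t := hbd
  · -- upper bound eventually
    filter_upwards [eventually_gt_atTop 0] with y hy
    have hexp : Real.exp (-y) < 1 := Real.exp_lt_one_iff.mpr (by linarith)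
    have hx : (1 - Real.exp (-y)) ∈ Ioo (0:ℝ) 1 := by
      constructor
      · linarith
      · linarith [Real.exp_pos (-y)]
    have hLval : nuL (1 - Real.exp (-y)) = y := by
      simp [nuL, Real.log_exp]
    have hbd := (nuf_integral_bounds hd1 ha hx).2
    rw [hnubar _ hx]
    rw [div_le_one (by positivity)]
    have hyd : y ^ (-(d-1)) = y ^ (1 - d) := by ring_nf
    rw [hyd]
    calc (∫ t in Ioo (1 - Real.exp (-y)) 1, nuf a d t)
        ≤ nuL (1 - Real.exp (-y)) ^ (1-d) / (d-1) := hbd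
      _ = y ^ (1-d) / (d-1) := by rw [hLval]


lemma nuG_tendsto (d : ℝ) :
    Tendsto (fun t : ℝ => t ^ d * nuh d t) (nhdsWithin 0 (Ioi 0)) (nhds 1) := by
  -- t / nuL t → 1
  have hderiv : HasDerivAt nuL 1 0 := by
    have hsub : HasDerivAt (fun t : ℝ => 1 - t) (-1) (0:ℝ) := by
      simpa using (hasDerivAt_id (0:ℝ)).const_sub 1
    have hlog : HasDerivAt (fun t : ℝ => Real.log (1 - t)) (-1 / (1 - 0)) 0 :=
      hsub.log (by norm_num)
    have hn := hlog.neg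
    have : HasDerivAt (fun t : ℝ => -Real.log (1 - t)) 1 0 := by
      exact hn.congr_deriv (by norm_num)
    exact this
  have hslope : Tendsto (fun t : ℝ => nuL t / t) (nhdsWithin 0 (Ioi 0)) (nhds 1) := by
    have h := hasDerivAt_iff_tendsto_slope.mp hderiv
    have h2 : Tendsto (slope nuL 0) (nhdsWithin 0 (Ioi 0)) (nhds 1) :=
      h.mono_left (nhdsWithin_mono _ (fun t ht => by
        simp only [mem_compl_iff, mem_singleton_iff]
        exact ne_of_gt ht))
    refine h2.congr' ?_
    filter_upwards [self_mem_nhdsWithin] with t ht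
    have : nuL 0 = 0 := by simp [nuL]
    rw [slope_def_field, this]
    simp [div_eq_mul_inv]
  have hinv : Tendsto (fun t : ℝ => t / nuL t) (nhdsWithin 0 (Ioi 0)) (nhds 1) := by
    have := hslope.inv₀ one_ne_zero
    simp only [inv_div, inv_one] at this
    exact this
  have hrpow : Tendsto (fun t : ℝ => (t / nuL t) ^ d) (nhdsWithin 0 (Ioi 0)) (nhds 1) := by
    have hc : ContinuousAt (fun s : ℝ => s ^ d) 1 :=
      Real.continuousAt_rpow_const _ _ (Or.inl one_ne_zero)
    have := hc.tendsto.comp hinv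
    simpa [Real.one_rpow, Function.comp_def] using this
  have hfac : Tendsto (fun t : ℝ => (1 - t)⁻¹) (nhdsWithin 0 (Ioi 0)) (nhds 1) := by
    have h1 : Tendsto (fun t : ℝ => 1 - t) (nhds 0) (nhds 1) := by
      have : Continuous (fun t : ℝ => 1 - t) := by fun_prop
      simpa using this.tendsto 0
    have h2 : Tendsto (fun t : ℝ => 1 - t) (nhdsWithin 0 (Ioi 0)) (nhds 1) :=
      h1.mono_left nhdsWithin_le_nhds
    have := h2.inv₀ one_ne_zero
    simpa using this
  have := hrpow.mul hfac
  rw [mul_one] at this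
  refine this.congr' ?_
  filter_upwards [self_mem_nhdsWithin,
    Ioo_mem_nhdsGT_of_mem (by norm_num : (0:ℝ) ∈ Ico (0:ℝ) 1)] with t ht ht1
  have htI : t ∈ Ioo (0:ℝ) 1 := ht1
  have hL : 0 < nuL t := nuL_pos htI
  have ht0 : (0:ℝ) < t := ht
  rw [Real.div_rpow ht0.le hL.le, nuh]
  rw [Real.rpow_neg hL.le]
  field_simp


set_option maxHeartbeats 1000000 in
lemma nuN_tendsto {a d : ℝ} (hd1 : 2 < d) (hd2 : d < 3) (ha1 : d < a) (ha2 : a < d + 1) :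
    Tendsto (fun x : ℝ => x ^ (d + 1 - a) * ∫ t in Ioo x 1, nuf a d t)
      (nhdsWithin 0 (Ioi 0)) (nhds (1 / (d + 1 - a))) := by
  have ha : 2 ≤ a := by linarith
  set c := d + 1 - a with hc_def
  have hc : 0 < c := by simp [hc_def]; linarith
  have hc1 : c < 1 := by simp [hc_def]; linarith
  set p := a - 2 - d with hp_def
  have hp1 : p + 1 = -c := by simp [hp_def, hc_def]; ring
  have hpne : p ≠ -1 := by intro h; rw [h] at hp1; simp at hp1; linarith
  rw [Metric.tendsto_nhds]
  intro ε hε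
  set ε₁ := c * ε / 4 with hε₁_def
  have hε₁ : 0 < ε₁ := by positivity
  -- choose δ
  have hev : {t : ℝ | dist (t ^ d * nuh d t) 1 < ε₁} ∈ nhdsWithin (0:ℝ) (Ioi 0) :=
    (nuG_tendsto d) (Metric.ball_mem_nhds _ hε₁)
  rw [mem_nhdsGT_iff_exists_Ioo_subset] at hev
  obtain ⟨w, hw, hwsub⟩ := hev
  set δ := min w (1/2) with hδ_def
  have hδ0 : 0 < δ := lt_min hw (by norm_num)
  have hδ1 : δ < 1 := lt_of_le_of_lt (min_le_right _ _) (by norm_num)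
  have hδI : δ ∈ Ioo (0:ℝ) 1 := ⟨hδ0, hδ1⟩
  have hδsub : Ioo (0:ℝ) δ ⊆ {t : ℝ | dist (t ^ d * nuh d t) 1 < ε₁} := by
    intro t ht; exact hwsub ⟨ht.1, lt_of_lt_of_le ht.2 (min_le_left _ _)⟩
  -- pointwise bounds on (0, δ)
  have hgood : ∀ t ∈ Ioo (0:ℝ) δ,
      (1 - ε₁) * t ^ p ≤ nuf a d t ∧ nuf a d t ≤ (1 + ε₁) * t ^ p := by
    intro t ht
    have ht1 : t ∈ Ioo (0:ℝ) 1 := ⟨ht.1, lt_trans ht.2 hδ1⟩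
    have hdist := hδsub ht
    rw [mem_setOf_eq, Real.dist_eq, abs_sub_lt_iff] at hdist
    have htp : 0 < t ^ p := Real.rpow_pos_of_pos ht.1 _
    have heq : nuf a d t = t ^ p * (t ^ d * nuh d t) := by
      rw [nuf, nuh]
      rw [show a - 2 = p + d by rw [hp_def]; ring, Real.rpow_add ht.1]
      ring
    constructor
    · rw [heq]
      have : (1 - ε₁) ≤ t ^ d * nuh d t := by linarith [hdist.2]
      nlinarith
    · rw [heq]
      have : t ^ d * nuh d t ≤ (1 + ε₁) := by linarith [hdist.1]
      nlinarith
  -- constants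
  set Nδ := ∫ t in Ioo δ 1, nuf a d t with hNδ_def
  have hNδ0 : 0 ≤ Nδ := setIntegral_nonneg measurableSet_Ioo
    (fun t ht => nuf_nonneg ⟨lt_trans hδ0 ht.1, ht.2⟩)
  -- eventual facts
  have hxc0 : Tendsto (fun x : ℝ => x ^ c) (nhdsWithin 0 (Ioi 0)) (nhds 0) := by
    have h0 : ContinuousAt (fun x : ℝ => x ^ c) 0 :=
      Real.continuousAt_rpow_const _ _ (Or.inr hc.le)
    have := h0.tendsto.mono_left (nhdsWithin_le_nhds (s := Ioi (0:ℝ)))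
    rwa [Real.zero_rpow hc.ne'] at this
  have Ev2 : ∀ᶠ x in nhdsWithin (0:ℝ) (Ioi 0), x ^ c * δ ^ (-c) < ε₁ := by
    have := hxc0.mul_const (δ ^ (-c))
    rw [zero_mul] at this
    exact this.eventually (gt_mem_nhds hε₁)
  have Ev3 : ∀ᶠ x in nhdsWithin (0:ℝ) (Ioi 0), x ^ c * Nδ < ε₁ := by
    have := hxc0.mul_const Nδ
    rw [zero_mul] at this
    exact this.eventually (gt_mem_nhds hε₁)
  have Ev1 : Ioo (0:ℝ) δ ∈ nhdsWithin (0:ℝ) (Ioi 0) :=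
    Ioo_mem_nhdsGT_of_mem ⟨le_refl _, hδ0⟩
  filter_upwards [Ev1, Ev2, Ev3] with x hx1 hx2 hx3
  have hx0 : 0 < x := hx1.1
  have hxδ : x < δ := hx1.2
  have hxI : x ∈ Ioo (0:ℝ) 1 := ⟨hx0, lt_trans hxδ hδ1⟩
  have hxc_pos : 0 < x ^ c := Real.rpow_pos_of_pos hx0 _
  -- integrability
  have hIf : IntegrableOn (nuf a d) (Ioo x 1) := nuf_integrableOn hd1 ha hxI
  have hIfIoc : IntegrableOn (nuf a d) (Ioc x δ) :=
    hIf.mono_set (fun t ht => ⟨ht.1, lt_of_le_of_lt ht.2 hδ1⟩)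
  have hIfoo : IntegrableOn (nuf a d) (Ioo x δ) :=
    hIfIoc.mono_set Ioo_subset_Ioc_self
  have h0notin : (0:ℝ) ∉ uIcc x δ := notMem_uIcc_of_lt hx0 hδ0
  have hIrp : IntegrableOn (fun t : ℝ => t ^ p) (Ioo x δ) := by
    have h1 : IntervalIntegrable (fun t : ℝ => t ^ p) volume x δ :=
      intervalIntegral.intervalIntegrable_rpow (Or.inr h0notin)
    rw [intervalIntegrable_iff, uIoc_of_le hxδ.le] at h1
    exact h1.mono_set Ioo_subset_Ioc_self
  -- split the integral
  have hsplit : (∫ t in Ioo x 1, nuf a d t)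
      = (∫ t in Ioo x δ, nuf a d t) + Nδ := by
    rw [← Ioc_union_Ioo_eq_Ioo hxδ.le hδ1]
    rw [setIntegral_union (by
        rw [Set.disjoint_left]; intro t ht1 ht2; exact absurd ht2.1 (not_lt.mpr ht1.2))
      measurableSet_Ioo hIfIoc
      (hIf.mono_set (fun t ht => ⟨lt_trans hxδ ht.1, ht.2⟩))]
    rw [integral_Ioc_eq_integral_Ioo]
  -- value of A
  have hA_val : (∫ t in Ioo x δ, (t:ℝ) ^ p) = (δ ^ (p+1) - x ^ (p+1)) / (p+1) := by
    rw [← integral_Ioc_eq_integral_Ioo, ← intervalIntegral.integral_of_le hxδ.le,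
      integral_rpow (Or.inr ⟨hpne, h0notin⟩)]
  set u := x ^ c * δ ^ (-c) with hu_def
  have hu0 : 0 < u := mul_pos hxc_pos (Real.rpow_pos_of_pos hδ0 _)
  have e1 : x ^ c * x ^ (-c) = 1 := by
    rw [← Real.rpow_add hx0]; simp
  have hA : x ^ c * ((δ ^ (p+1) - x ^ (p+1)) / (p+1)) = (1 - u) / c := by
    rw [hp1]
    calc x ^ c * ((δ ^ (-c) - x ^ (-c)) / (-c))
        = (x ^ c * δ ^ (-c) - x ^ c * x ^ (-c)) / (-c) := by ring
      _ = (u - 1) / (-c) := by rw [e1, hu_def]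
      _ = (1 - u) / c := by rw [div_neg, ← neg_div]; ring_nf
  -- bounds on I₁
  have hupper : (∫ t in Ioo x δ, nuf a d t) ≤ (1 + ε₁) * ((δ ^ (p+1) - x ^ (p+1)) / (p+1)) := by
    rw [← hA_val, ← MeasureTheory.integral_const_mul]
    apply setIntegral_mono_on hIfoo (hIrp.const_mul _) measurableSet_Ioo
    intro t ht
    exact (hgood t ⟨lt_trans hx0 ht.1, ht.2⟩).2
  have hlower : (1 - ε₁) * ((δ ^ (p+1) - x ^ (p+1)) / (p+1)) ≤ ∫ t in Ioo x δ, nuf a d t := by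
    rw [← hA_val, ← MeasureTheory.integral_const_mul]
    apply setIntegral_mono_on (hIrp.const_mul _) hIfoo measurableSet_Ioo
    intro t ht
    exact (hgood t ⟨lt_trans hx0 ht.1, ht.2⟩).1
  -- combine
  set Nx := ∫ t in Ioo x 1, nuf a d t with hNx_def
  set v := x ^ c * Nδ with hv_def
  have hv0 : 0 ≤ v := mul_nonneg hxc_pos.le hNδ0
  have hub : x ^ c * Nx ≤ (1 + ε₁) * (1 - u) / c + v := by
    rw [hsplit, mul_add]
    have : x ^ c * (∫ t in Ioo x δ, nuf a d t)
        ≤ x ^ c * ((1 + ε₁) * ((δ ^ (p+1) - x ^ (p+1)) / (p+1))) :=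
      mul_le_mul_of_nonneg_left hupper hxc_pos.le
    have e2 : x ^ c * ((1 + ε₁) * ((δ ^ (p+1) - x ^ (p+1)) / (p+1)))
        = (1 + ε₁) * ((1 - u) / c) := by
      rw [← hA]; ring
    rw [← hv_def]
    calc x ^ c * (∫ t in Ioo x δ, nuf a d t) + v
        ≤ (1 + ε₁) * ((1 - u)/c) + v := by rw [← e2]; linarith
      _ = (1 + ε₁) * (1 - u) / c + v := by ring
  have hlb : (1 - ε₁) * (1 - u) / c ≤ x ^ c * Nx := by
    rw [hsplit, mul_add]
    have h1 : x ^ c * ((1 - ε₁) * ((δ ^ (p+1) - x ^ (p+1)) / (p+1)))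
        ≤ x ^ c * (∫ t in Ioo x δ, nuf a d t) :=
      mul_le_mul_of_nonneg_left hlower hxc_pos.le
    have e2 : x ^ c * ((1 - ε₁) * ((δ ^ (p+1) - x ^ (p+1)) / (p+1)))
        = (1 - ε₁) * ((1 - u) / c) := by
      rw [← hA]; ring
    have e3 : (1 - ε₁) * ((1 - u) / c) = (1 - ε₁) * (1 - u) / c := by ring
    linarith [h1, mul_nonneg hxc_pos.le hNδ0]
  -- final estimates
  rw [Real.dist_eq, abs_sub_lt_iff]
  have hε₁c : ε₁ / c = ε / 4 := by
    rw [hε₁_def]; field_simp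
  have hε₁lt : ε₁ < ε / 4 := by
    rw [hε₁_def]; nlinarith
  constructor
  · -- x^c Nx - 1/c < ε
    have k1 : (1 + ε₁) * (1 - u) ≤ 1 + ε₁ := by nlinarith
    have k2 : (1 + ε₁) * (1 - u) / c ≤ (1 + ε₁) / c := (div_le_div_iff_of_pos_right hc).mpr k1
    have k3 : (1 + ε₁) / c = 1 / c + ε / 4 := by
      rw [hε₁_def]; field_simp
    linarith [hub, hx3, hε₁lt, hε]
  · -- 1/c - x^c Nx < ε
    have k4 : 1 - ε₁ - u ≤ (1 - ε₁) * (1 - u) := by nlinarith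
    have k5 : (1 - ε₁ - u) / c ≤ (1 - ε₁) * (1 - u) / c := (div_le_div_iff_of_pos_right hc).mpr k4
    have k6 : (1 - ε₁ - u) / c = 1 / c - ε / 4 - u / c := by
      rw [hε₁_def]; field_simp
    have k7 : u / c < ε / 4 := by
      have := (div_lt_div_iff_of_pos_right hc).mpr hx2
      rwa [hε₁c] at this
    linarith [hlb, hε]


/-- For `ν(dx) = x^(a-2) dx / ((1-x)|log(1-x)|^d)` with `d ∈ (2,3)` and
`a ∈ (d, d+1)`: (i) `∫₀¹ x ν(dx) < ∞`; (ii) the tail `ν̄(x) = ν([x,1))` is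
regularly varying at `0` with index `-(d+1-a) ∈ (-1,0)`; (iii)
`ν̄(1-e^{-y}) ~ y^{-(d-1)}/(d-1)` as `y → ∞`. -/
theorem example_measure_properties
    (a d : ℝ) (hd1 : 2 < d) (hd2 : d < 3) (ha1 : d < a) (ha2 : a < d + 1)
    (f : ℝ → ℝ)
    (hf : ∀ x ∈ Ioo (0:ℝ) 1,
      f x = x ^ (a - 2) * (1 - x)⁻¹ * |Real.log (1 - x)| ^ (-d))
    (nubar : ℝ → ℝ)
    (hnubar : ∀ x ∈ Ioo (0:ℝ) 1, nubar x = ∫ y in Ioo x 1, f y) :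
    IntegrableOn (fun x => x * f x) (Ioo (0:ℝ) 1)
    ∧ (∀ lam : ℝ, 0 < lam →
        Tendsto (fun x => nubar (lam * x) / nubar x) (nhdsWithin 0 (Ioi (0:ℝ)))
          (nhds (lam ^ (-(d + 1 - a)))))
    ∧ Tendsto (fun y : ℝ => nubar (1 - Real.exp (-y)) / (y ^ (-(d - 1)) / (d - 1)))
        atTop (nhds 1) := by
  have ha : 2 ≤ a := by linarith
  -- f agrees with nuf on (0,1)
  have hfeq : EqOn f (nuf a d) (Ioo (0:ℝ) 1) := by
    intro t ht
    have h1 : (0:ℝ) < 1 - t := by linarith [ht.2]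
    have h2 : Real.log (1 - t) < 0 := Real.log_neg h1 (by linarith [ht.1])
    rw [hf t ht, nuf]
    rw [abs_of_neg h2]
    show t ^ (a-2) * (1 - t)⁻¹ * nuL t ^ (-d) = _
    ring
  -- nubar agrees with integral of nuf
  have hnubar' : ∀ x ∈ Ioo (0:ℝ) 1, nubar x = ∫ t in Ioo x 1, nuf a d t := by
    intro x hx
    rw [hnubar x hx]
    apply setIntegral_congr_fun measurableSet_Ioo
    intro t ht
    exact hfeq ⟨lt_trans hx.1 ht.1, ht.2⟩
  refine ⟨?_, ?_, ?_⟩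
  · -- part (i)
    have := part_i hd1 ha1 ha2
    apply this.congr_fun _ measurableSet_Ioo
    intro t ht
    show t * nuf a d t = t * f t
    rw [hfeq ht]
  · -- part (ii)
    intro lam hlam
    set c := d + 1 - a with hc_def
    have hc : 0 < c := by rw [hc_def]; linarith
    have hN := nuN_tendsto hd1 hd2 ha1 ha2
    have hΦ : Tendsto (fun x : ℝ => x ^ c * nubar x) (nhdsWithin 0 (Ioi 0))
        (nhds (1 / c)) := by
      refine hN.congr' ?_
      filter_upwards [Ioo_mem_nhdsGT_of_mem
        (by norm_num : (0:ℝ) ∈ Ico (0:ℝ) 1)] with x hx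
      rw [hnubar' x hx]
    have hmap : Tendsto (fun x : ℝ => lam * x) (nhdsWithin 0 (Ioi 0))
        (nhdsWithin 0 (Ioi 0)) := by
      rw [tendsto_nhdsWithin_iff]
      constructor
      · have h0 : Tendsto (fun x : ℝ => lam * x) (nhds 0) (nhds 0) := by
          have hcm : Continuous (fun x : ℝ => lam * x) := by fun_prop
          have := hcm.tendsto (0:ℝ)
          simpa using this
        exact h0.mono_left nhdsWithin_le_nhds
      · filter_upwards [self_mem_nhdsWithin] with x hx
        exact mul_pos hlam hx
    have hdiv : Tendsto (fun x : ℝ => ((lam * x) ^ c * nubar (lam * x)) / (x ^ c * nubar x))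
        (nhdsWithin 0 (Ioi 0)) (nhds 1) := by
      have := (hΦ.comp hmap).div hΦ (by positivity)
      have h1c : (1:ℝ)/c / (1/c) = 1 := by
        field_simp
      rw [h1c] at this
      exact this
    have hlast := hdiv.mul_const (lam ^ (-c))
    rw [one_mul] at hlast
    refine hlast.congr' ?_
    filter_upwards [self_mem_nhdsWithin] with x hx
    have hx0 : (0:ℝ) < x := hx
    have hxc : x ^ c ≠ 0 := (Real.rpow_pos_of_pos hx0 c).ne'
    have h2 : (lam * x) ^ c = lam ^ c * x ^ c := Real.mul_rpow hlam.le hx0.le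
    have h1 : lam ^ c * lam ^ (-c) = 1 := by
      rw [← Real.rpow_add hlam]; simp
    rw [h2, div_mul_eq_mul_div,
      show lam ^ c * x ^ c * nubar (lam * x) * lam ^ (-c)
        = x ^ c * nubar (lam * x) * (lam ^ c * lam ^ (-c)) by ring,
      h1, mul_one, mul_div_mul_left _ _ hxc]
  · -- part (iii)
    exact part_iii hd1 hd2 ha1 ha2 nubar hnubar'
end

section
/- If ν̄(x) ~ x^{-γ} ℓ(1/x) as x ↓ 0 for γ ∈ [0,1) and ℓ slowly varying at ∞, then the Laplace exponent satisfies Φ(z) ~ Γ(1-γ) z^γ ℓ(z) as z → ∞. -/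
/-
Layer cake gives `Φ(z) = z ∫₀¹ (1 - t)^(z-1) ν̄(t) dt`, and the substitution `t = s / z` turns
`Φ(z) / (z^γ ℓ(z))` into `∫₀^∞ (1 - s/z)^(z-1) ν̄(s/z) / (z^γ ℓ(z)) ds`. The integrand tends to
`e^(-s) s^(-γ)`, whose integral is `Γ(1 - γ)`. Dominated convergence applies thanks to a
Potter-type bound: slow variation gives `ℓ(2z) ≤ 2^δ ℓ(z)` for large `z`, hence
`ℓ(2^n z) ≤ 2^(nδ) ℓ(z)`, and the monotonicity of `ν̄` interpolates between dyadic points. So the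
integrand is at most `K s^(-(γ+δ))` on `(0, 1]` and `K e^(-s/2)` beyond, and `γ + δ < 1`.
-/

open MeasureTheory Set Real Filter Topology

section SlowVariation

variable {ℓ : ℝ → ℝ}

theorem le_pow_mul_of_doubling {c z₀ : ℝ} (hc : 0 ≤ c) (hz₀ : 0 ≤ z₀)
    (hdoub : ∀ z, z₀ ≤ z → ℓ (2 * z) ≤ c * ℓ z) (n : ℕ) {z : ℝ} (hz : z₀ ≤ z) :
    ℓ (2 ^ n * z) ≤ c ^ n * ℓ z := by
  induction n with
  | zero => simp
  | succ n ih =>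
    have hz' : z₀ ≤ 2 ^ n * z :=
      hz.trans (le_mul_of_one_le_left (hz₀.trans hz) (one_le_pow₀ one_le_two))
    calc ℓ (2 ^ (n + 1) * z) = ℓ (2 * (2 ^ n * z)) := by ring_nf
      _ ≤ c * ℓ (2 ^ n * z) := hdoub _ hz'
      _ ≤ c * (c ^ n * ℓ z) := mul_le_mul_of_nonneg_left ih hc
      _ = c ^ (n + 1) * ℓ z := by ring

theorem exists_forall_ge_doubling_le (hℓpos : ∀ᶠ z in atTop, 0 < ℓ z)
    (hℓ2 : Tendsto (fun z => ℓ (2 * z) / ℓ z) atTop (𝓝 1)) {c : ℝ} (hc : 1 < c) :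
    ∃ z₀, 0 ≤ z₀ ∧ ∀ z, z₀ ≤ z → 0 < ℓ z ∧ ℓ (2 * z) ≤ c * ℓ z := by
  obtain ⟨M, hM⟩ := eventually_atTop.mp ((hℓ2.eventually_lt_const hc).and hℓpos)
  refine ⟨max M 0, le_max_right _ _, fun z hz => ?_⟩
  obtain ⟨hlt, hpos⟩ := hM z (le_of_max_le_left hz)
  exact ⟨hpos, ((div_lt_iff₀ hpos).mp hlt).le⟩

end SlowVariation

section Tail

variable {g ℓ : ℝ → ℝ} {γ : ℝ}

theorem exists_le_mul_of_tendsto_div (hℓpos : ∀ᶠ z in atTop, 0 < ℓ z)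
    (htail : Tendsto (fun x => g x / (x ^ (-γ) * ℓ (1 / x))) (𝓝[>] 0) (𝓝 1))
    {C : ℝ} (hC : 1 < C) : ∃ t₀ > 0, ∀ t ∈ Ioc 0 t₀, g t ≤ C * (t ^ (-γ) * ℓ (1 / t)) := by
  have hℓinv : ∀ᶠ t in 𝓝[>] (0 : ℝ), 0 < ℓ (1 / t) := by
    have hinv : Tendsto (fun t : ℝ => 1 / t) (𝓝[>] 0) atTop := by
      simpa only [one_div] using tendsto_inv_nhdsGT_zero
    exact hinv.eventually hℓpos
  obtain ⟨t₀, ht₀, hsub⟩ :=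
    mem_nhdsGT_iff_exists_Ioc_subset.mp ((htail.eventually_lt_const hC).and hℓinv)
  refine ⟨t₀, ht₀, fun t ht => ?_⟩
  obtain ⟨hlt, hℓt⟩ := hsub ht
  exact ((div_lt_iff₀ (mul_pos (rpow_pos_of_pos ht.1 _) hℓt)).mp hlt).le

theorem comp_div_le_rpow_mul (hγ : 0 ≤ γ) {δ : ℝ} (hδ : 0 ≤ δ) (hg : AntitoneOn g (Ioi 0))
    {C t₀ : ℝ} (hC : 0 ≤ C) (ht₀ : 0 < t₀)
    (hgt : ∀ t ∈ Ioc 0 t₀, g t ≤ C * (t ^ (-γ) * ℓ (1 / t)))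
    {z : ℝ} (hz : 1 / t₀ ≤ z) (hℓz : 0 ≤ ℓ z) (hdoub : ∀ n : ℕ, ℓ (2 ^ n * z) ≤ (2 ^ δ) ^ n * ℓ z)
    {s : ℝ} (hs : s ∈ Ioc 0 1) :
    g (s / z) ≤ C * 2 ^ (γ + δ) * s ^ (-(γ + δ)) * (z ^ γ * ℓ z) := by
  obtain ⟨hs0, hs1⟩ := hs
  have hz0 : 0 < z := (one_div_pos.mpr ht₀).trans_le hz
  -- Compare with `g` at the dyadic point `1 / (2^(n+1) z) ≤ s / z`, where `2^n ≤ 1/s < 2^(n+1)`.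
  obtain ⟨n, hn, hn'⟩ := exists_nat_pow_near (one_le_one_div hs0 hs1) one_lt_two
  set A : ℝ := 2 ^ (n + 1)
  have hA1 : 1 ≤ A := one_le_pow₀ one_le_two
  have hA0 : 0 < A := by positivity
  have hAs : A ≤ 2 / s := by
    calc A = 2 * 2 ^ n := pow_succ' _ _
      _ ≤ 2 * (1 / s) := by gcongr
      _ = 2 / s := by ring
  have ht_le : 1 / (A * z) ≤ s / z := by
    rw [div_le_div_iff₀ (by positivity) hz0]
    nlinarith [(div_lt_iff₀ hs0).mp hn']
  have ht_t₀ : 1 / (A * z) ≤ t₀ :=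
    calc 1 / (A * z) ≤ 1 / z := one_div_le_one_div_of_le hz0 (le_mul_of_one_le_left hz0.le hA1)
      _ ≤ t₀ := (one_div_le ht₀ hz0).mp hz
  have hpow : (A * z)⁻¹ ^ (-γ) = A ^ γ * z ^ γ := by
    rw [inv_rpow (by positivity), rpow_neg (by positivity), inv_inv, mul_rpow hA0.le hz0.le]
  have hℓA : ℓ (A * z) ≤ A ^ δ * ℓ z := by
    have hcomm : ((2 : ℝ) ^ δ) ^ (n + 1) = A ^ δ := by
      rw [← rpow_mul_natCast zero_le_two, mul_comm, rpow_natCast_mul zero_le_two]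
    exact hcomm ▸ hdoub (n + 1)
  have hAγδ : A ^ γ * A ^ δ ≤ 2 ^ (γ + δ) * s ^ (-(γ + δ)) := by
    rw [← rpow_add hA0, rpow_neg hs0.le, ← div_eq_mul_inv, ← div_rpow zero_le_two hs0.le]
    exact rpow_le_rpow hA0.le hAs (by positivity)
  calc g (s / z) ≤ g (1 / (A * z)) :=
        hg (mem_Ioi.mpr (by positivity)) (mem_Ioi.mpr (by positivity)) ht_le
    _ ≤ C * ((1 / (A * z)) ^ (-γ) * ℓ (1 / (1 / (A * z)))) :=
        hgt _ ⟨by positivity, ht_t₀⟩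
    _ = C * (A ^ γ * z ^ γ * ℓ (A * z)) := by rw [one_div_one_div, one_div, hpow]
    _ ≤ C * (A ^ γ * z ^ γ * (A ^ δ * ℓ z)) := by gcongr
    _ = C * (A ^ γ * A ^ δ) * (z ^ γ * ℓ z) := by ring
    _ ≤ C * (2 ^ (γ + δ) * s ^ (-(γ + δ))) * (z ^ γ * ℓ z) := by gcongr
    _ = C * 2 ^ (γ + δ) * s ^ (-(γ + δ)) * (z ^ γ * ℓ z) := by ring

theorem eventually_comp_div_le_rpow_mul (hγ : 0 ≤ γ) (hg : AntitoneOn g (Ioi 0))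
    (hℓpos : ∀ᶠ z in atTop, 0 < ℓ z)
    (hℓ2 : Tendsto (fun z => ℓ (2 * z) / ℓ z) atTop (𝓝 1))
    (htail : Tendsto (fun x => g x / (x ^ (-γ) * ℓ (1 / x))) (𝓝[>] 0) (𝓝 1))
    {δ : ℝ} (hδ : 0 < δ) :
    ∀ᶠ z in atTop, ∀ s ∈ Ioc 0 1, g (s / z) ≤ 2 * 2 ^ (γ + δ) * s ^ (-(γ + δ)) * (z ^ γ * ℓ z) := by
  obtain ⟨t₀, ht₀, hgt⟩ := exists_le_mul_of_tendsto_div hℓpos htail one_lt_two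
  obtain ⟨z₀, hz₀, hz₀ℓ⟩ := exists_forall_ge_doubling_le hℓpos hℓ2 (one_lt_rpow one_lt_two hδ)
  filter_upwards [eventually_ge_atTop z₀, eventually_ge_atTop (1 / t₀)] with z hz hzt s hs
  exact comp_div_le_rpow_mul hγ hδ.le hg zero_le_two ht₀ hgt hzt (hz₀ℓ z hz).1.le
    (fun n => le_pow_mul_of_doubling (by positivity) hz₀ (fun z hz => (hz₀ℓ z hz).2) n hz) hs

theorem tendsto_comp_div_div_rpow_mul (hℓpos : ∀ᶠ z in atTop, 0 < ℓ z)
    (hℓslow : ∀ c : ℝ, 0 < c → Tendsto (fun z => ℓ (c * z) / ℓ z) atTop (𝓝 1))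
    (htail : Tendsto (fun x => g x / (x ^ (-γ) * ℓ (1 / x))) (𝓝[>] 0) (𝓝 1))
    {s : ℝ} (hs : 0 < s) :
    Tendsto (fun z => g (s / z) / (z ^ γ * ℓ z)) atTop (𝓝 (s ^ (-γ))) := by
  have hsz : Tendsto (fun z : ℝ => s / z) atTop (𝓝[>] 0) :=
    tendsto_nhdsWithin_iff.mpr ⟨tendsto_const_nhds.div_atTop tendsto_id,
      eventually_gt_atTop 0 |>.mono fun z hz => div_pos hs hz⟩
  have hlim := ((htail.comp hsz).mul (hℓslow s⁻¹ (inv_pos.mpr hs))).mul_const (s ^ (-γ))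
  rw [one_mul, one_mul] at hlim
  refine hlim.congr' ?_
  filter_upwards [eventually_gt_atTop 0, hℓpos,
    (tendsto_id.atTop_div_const hs).eventually hℓpos] with z hz hℓz hℓsz
  have hpow : (s / z) ^ (-γ) = s ^ (-γ) * z ^ γ := by
    rw [div_rpow hs.le hz.le, rpow_neg hz.le, div_inv_eq_mul]
  simp only [Function.comp_apply, one_div_div, inv_mul_eq_div, hpow]
  have := rpow_pos_of_pos hs (-γ)
  have := rpow_pos_of_pos hz γ
  have : ℓ (z / s) ≠ 0 := hℓsz.ne'
  field_simp

theorem tendsto_one_sub_div_rpow_sub_one {s : ℝ} :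
    Tendsto (fun z : ℝ => (1 - s / z) ^ (z - 1)) atTop (𝓝 (exp (-s))) := by
  have hbase : Tendsto (fun z : ℝ => 1 - s / z) atTop (𝓝 1) := by
    simpa using
      tendsto_const_nhds.sub (tendsto_const_nhds.div_atTop (tendsto_id (x := (atTop : Filter ℝ))))
  have hlim := (tendsto_one_add_div_rpow_exp (-s)).div hbase one_ne_zero
  rw [div_one] at hlim
  refine hlim.congr' ?_
  filter_upwards [eventually_gt_atTop s, eventually_gt_atTop 0] with z hzs hz
  have hb : 0 < 1 - s / z := sub_pos.mpr ((div_lt_one hz).mpr hzs)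
  change (1 + -s / z) ^ z / (1 - s / z) = _
  rw [neg_div, ← sub_eq_add_neg, rpow_sub hb, rpow_one]

theorem one_sub_div_rpow_le_exp {s z : ℝ} (hs : 0 ≤ s) (hsz : s ≤ z) (hz : 2 ≤ z) :
    (1 - s / z) ^ (z - 1) ≤ exp (-(s / 2)) := by
  have hz0 : 0 < z := by linarith
  have hbase : 0 ≤ 1 - s / z := sub_nonneg.mpr ((div_le_one hz0).mpr hsz)
  calc (1 - s / z) ^ (z - 1) ≤ exp (-(s / z)) ^ (z - 1) :=
        rpow_le_rpow hbase (by linarith [add_one_le_exp (-(s / z))]) (by linarith)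
    _ = exp (-(s / z) * (z - 1)) := (exp_mul _ _).symm
    _ ≤ exp (-(s / 2)) := by
        gcongr
        rw [neg_mul, neg_le_neg_iff, div_mul_eq_mul_div, le_div_iff₀ hz0]
        nlinarith

theorem norm_one_sub_div_rpow_mul_le (hg0 : ∀ t, 0 ≤ g t) (hg1 : ∀ t, 1 ≤ t → g t = 0)
    (hg : AntitoneOn g (Ioi 0)) {K β z D : ℝ} (hK : 0 ≤ K) (hz : 2 ≤ z) (hD : 0 < D)
    (hsmall : ∀ s ∈ Ioc 0 1, g (s / z) ≤ K * s ^ (-β) * D) {s : ℝ} (hs : 0 < s) :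
    ‖(1 - s / z) ^ (z - 1) * (g (s / z) / D)‖ ≤
      K * ((Ioc 0 1).indicator (fun s => s ^ (-β)) s + exp (-(s / 2))) := by
  have hz0 : 0 < z := by linarith
  have hbound : 0 ≤ K * ((Ioc 0 1).indicator (fun s => s ^ (-β)) s + exp (-(s / 2))) :=
    mul_nonneg hK (add_nonneg (indicator_nonneg (fun t ht => rpow_nonneg ht.1.le _) _)
      (exp_pos _).le)
  rcases le_or_gt z s with hzs | hsz
  · rwa [hg1 _ ((one_le_div hz0).mpr hzs), zero_div, mul_zero, norm_zero]
  have hbase : 0 ≤ 1 - s / z := sub_nonneg.mpr ((div_le_one hz0).mpr hsz.le)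
  rw [Real.norm_of_nonneg (mul_nonneg (rpow_nonneg hbase _) (div_nonneg (hg0 _) hD.le))]
  by_cases hs1 : s ≤ 1
  · rw [indicator_of_mem (show s ∈ Ioc 0 1 from ⟨hs, hs1⟩)]
    calc (1 - s / z) ^ (z - 1) * (g (s / z) / D) ≤ 1 * (K * s ^ (-β)) :=
          mul_le_mul (rpow_le_one hbase (by linarith [div_pos hs hz0]) (by linarith))
            ((div_le_iff₀ hD).mpr (hsmall s ⟨hs, hs1⟩)) (div_nonneg (hg0 _) hD.le) zero_le_one
      _ ≤ K * (s ^ (-β) + exp (-(s / 2))) := by nlinarith [exp_pos (-(s / 2))]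
  · rw [indicator_of_notMem (fun h => hs1 h.2), zero_add]
    have hlarge : g (s / z) ≤ K * D := by
      calc g (s / z) ≤ g (1 / z) :=
            hg (one_div_pos.mpr hz0) (div_pos hs hz0) (by gcongr; linarith)
        _ ≤ K * 1 ^ (-β) * D := hsmall 1 (right_mem_Ioc.mpr one_pos)
        _ = K * D := by rw [one_rpow, mul_one]
    calc (1 - s / z) ^ (z - 1) * (g (s / z) / D) ≤ exp (-(s / 2)) * K :=
          mul_le_mul (one_sub_div_rpow_le_exp hs.le hsz.le hz) ((div_le_iff₀ hD).mpr hlarge)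
            (div_nonneg (hg0 _) hD.le) (exp_pos _).le
      _ = K * exp (-(s / 2)) := mul_comm _ _

theorem tendsto_integral_one_sub_div_rpow_mul (hγ0 : 0 ≤ γ) (hγ1 : γ < 1) (hgm : Measurable g)
    (hg0 : ∀ t, 0 ≤ g t) (hg1 : ∀ t, 1 ≤ t → g t = 0) (hg : AntitoneOn g (Ioi 0))
    (hℓpos : ∀ᶠ z in atTop, 0 < ℓ z)
    (hℓslow : ∀ c : ℝ, 0 < c → Tendsto (fun z => ℓ (c * z) / ℓ z) atTop (𝓝 1))
    (htail : Tendsto (fun x => g x / (x ^ (-γ) * ℓ (1 / x))) (𝓝[>] 0) (𝓝 1)) :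
    Tendsto (fun z => ∫ s in Ioi 0, (1 - s / z) ^ (z - 1) * (g (s / z) / (z ^ γ * ℓ z)))
      atTop (𝓝 (Gamma (1 - γ))) := by
  set δ := (1 - γ) / 2 with hδ
  set K : ℝ := 2 * 2 ^ (γ + δ)
  have hK : 0 ≤ K := by positivity
  rw [Gamma_eq_integral (by linarith), show 1 - γ - 1 = -γ by ring]
  refine tendsto_integral_filter_of_dominated_convergence
    (fun s => K * ((Ioc 0 1).indicator (fun s => s ^ (-(γ + δ))) s + exp (-(s / 2))))
    (Eventually.of_forall fun z => ?_) ?_ ?_ ?_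
  · exact Measurable.aestronglyMeasurable (by fun_prop)
  · filter_upwards [eventually_comp_div_le_rpow_mul hγ0 hg hℓpos (hℓslow 2 two_pos) htail
      (by rw [hδ]; linarith : 0 < δ), eventually_ge_atTop 2, eventually_gt_atTop 0, hℓpos]
      with z hsmall hz hz0 hℓz
    exact ae_restrict_of_forall_mem measurableSet_Ioi fun s hs =>
      norm_one_sub_div_rpow_mul_le hg0 hg1 hg hK hz (mul_pos (rpow_pos_of_pos hz0 _) hℓz)
        hsmall hs
  · have hsmall : IntegrableOn (fun s : ℝ => s ^ (-(γ + δ))) (Ioc 0 1) :=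
      (intervalIntegral.intervalIntegrable_rpow' (by rw [hδ]; linarith)).1
    have hexp : IntegrableOn (fun s => exp (-(s / 2))) (Ioi 0) :=
      (exp_neg_integrableOn_Ioi 0 one_half_pos).congr_fun (fun s _ => by ring_nf)
        measurableSet_Ioi
    exact ((hsmall.integrable_indicator measurableSet_Ioc).restrict.add hexp).const_mul K
  · exact ae_restrict_of_forall_mem measurableSet_Ioi fun s hs =>
      tendsto_one_sub_div_rpow_sub_one.mul (tendsto_comp_div_div_rpow_mul hℓpos hℓslow htail hs)

end Tail

theorem integral_mul_max_one_sub_rpow {z x : ℝ} (hz : 1 ≤ z) (hx : x ≤ 1) :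
    ∫ t in (0 : ℝ)..x, z * max (1 - t) 0 ^ (z - 1) = 1 - (1 - x) ^ z := by
  have hdrop : EqOn (fun t => z * max (1 - t) 0 ^ (z - 1)) (fun t => z * (1 - t) ^ (z - 1))
      (uIcc 0 x) := fun t ht => by
    simp only [max_eq_left (sub_nonneg.mpr (ht.2.trans (max_le zero_le_one hx)))]
  rw [intervalIntegral.integral_congr hdrop, intervalIntegral.integral_const_mul,
    intervalIntegral.integral_comp_sub_left (fun t => t ^ (z - 1)),
    integral_rpow (Or.inl (by linarith)), sub_zero, sub_add_cancel, one_rpow]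
  field_simp

theorem integral_Ioi_comp_div (f : ℝ → ℝ) {z : ℝ} (hz : 0 < z) :
    ∫ s in Ioi 0, f (s / z) = z * ∫ t in Ioi 0, f t := by
  simpa [div_eq_inv_mul] using integral_comp_mul_left_Ioi f 0 (inv_pos.mpr hz)

-- `toReal` sends an infinite mass to `0`, so `nuBar ν` is only antitone where the tails are finite.
noncomputable def nuBar (ν : Measure ℝ) (x : ℝ) : ℝ := (ν (Ico x 1)).toReal

@[fun_prop]
theorem measurable_nuBar (ν : Measure ℝ) : Measurable (nuBar ν) :=
  (Antitone.measurable fun _ _ hab => measure_mono (Ico_subset_Ico_left hab)).ennreal_toReal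

theorem nuBar_of_one_le (ν : Measure ℝ) {x : ℝ} (hx : 1 ≤ x) : nuBar ν x = 0 := by
  simp [nuBar, Ico_eq_empty_of_le hx]

theorem antitoneOn_nuBar {ν : Measure ℝ} (hfin : ∀ x, 0 < x → ν (Ico x 1) < ⊤) :
    AntitoneOn (nuBar ν) (Ioi 0) := fun a ha _ _ hab =>
  ENNReal.toReal_mono (hfin a ha).ne (measure_mono (Ico_subset_Ico_left hab))

theorem restrict_Ioo_setOf_le (ν : Measure ℝ) {t : ℝ} (ht : 0 < t) :
    ν.restrict (Ioo 0 1) {a | t ≤ a} = ν (Ico t 1) := by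
  rw [Measure.restrict_apply' measurableSet_Ioo]
  congr 1
  ext a
  simp only [mem_inter_iff, mem_ofPred_eq, mem_Ioo, mem_Ico]
  exact ⟨fun h => ⟨h.1, h.2.2⟩, fun h => ⟨h.1, ht.trans_le h.1, h.2⟩⟩

theorem integral_one_sub_one_sub_rpow {ν : Measure ℝ} (hfin : ∀ x, 0 < x → ν (Ico x 1) < ⊤)
    {z : ℝ} (hz : 1 ≤ z) :
    ∫ x in Ioo 0 1, (1 - (1 - x) ^ z) ∂ν = z * ∫ t in Ioi 0, (1 - t) ^ (z - 1) * nuBar ν t := by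
  -- The layer-cake density must be nonnegative on all of `(0, ∞)`, hence the `max`; past `1` it
  -- meets `nuBar ν = 0`, which also cancels the junk `rpow` of `1 - t < 0` on the right-hand side.
  set G : ℝ → ℝ := fun t => z * max (1 - t) 0 ^ (z - 1)
  have hG0 : ∀ t, 0 ≤ G t := fun t => mul_nonneg (by linarith) (rpow_nonneg (le_max_right _ _) _)
  have hGc : Continuous G :=
    continuous_const.mul (((continuous_const.sub continuous_id).max continuous_const).rpow_const
      fun _ => Or.inr (by linarith))
  have hlayer := lintegral_comp_eq_lintegral_meas_le_mul (ν.restrict (Ioo 0 1)) (f := id)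
    (ae_restrict_of_forall_mem measurableSet_Ioo fun x hx => hx.1.le) aemeasurable_id
    (fun t _ => hGc.intervalIntegrable _ _) (Eventually.of_forall hG0)
  have hftc : ∀ x ∈ Ioo (0 : ℝ) 1, ∫ t in (0 : ℝ)..x, G t = 1 - (1 - x) ^ z := fun x hx =>
    integral_mul_max_one_sub_rpow hz hx.2.le
  have hweight : EqOn (fun t => ν.restrict (Ioo 0 1) {a | t ≤ id a} * ENNReal.ofReal (G t))
      (fun t => ENNReal.ofReal (z * ((1 - t) ^ (z - 1) * nuBar ν t))) (Ioi 0) := by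
    intro t ht
    simp only [id, restrict_Ioo_setOf_le ν ht, G]
    rcases lt_or_ge t 1 with ht1 | ht1
    · have hw : 0 ≤ z * (1 - t) ^ (z - 1) :=
        mul_nonneg (by linarith) (rpow_nonneg (sub_nonneg.mpr ht1.le) _)
      rw [max_eq_left (by linarith), ← mul_assoc, ENNReal.ofReal_mul (p := z * _) hw, nuBar,
        ENNReal.ofReal_toReal (hfin t ht).ne, mul_comm]
    · simp [nuBar_of_one_le ν ht1, Ico_eq_empty_of_le ht1]
  rw [← integral_const_mul, integral_eq_lintegral_of_nonneg_ae, integral_eq_lintegral_of_nonneg_ae]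
  · congr 1
    calc ∫⁻ x in Ioo 0 1, ENNReal.ofReal (1 - (1 - x) ^ z) ∂ν
        = ∫⁻ x, ENNReal.ofReal (∫ t in (0 : ℝ)..id x, G t) ∂ν.restrict (Ioo 0 1) :=
          (setLIntegral_congr_fun measurableSet_Ioo fun x hx => by rw [id, hftc x hx])
      _ = _ := hlayer
      _ = _ := setLIntegral_congr_fun measurableSet_Ioi hweight
  · refine ae_restrict_of_forall_mem measurableSet_Ioi fun t ht => ?_
    rcases lt_or_ge t 1 with ht1 | ht1
    · have := rpow_nonneg (sub_nonneg.mpr ht1.le) (z - 1)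
      have : 0 ≤ nuBar ν t := ENNReal.toReal_nonneg
      positivity
    · simp [nuBar_of_one_le ν ht1]
  · exact (by fun_prop : Measurable _).aestronglyMeasurable
  · exact ae_restrict_of_forall_mem measurableSet_Ioo fun x hx =>
      sub_nonneg.mpr (rpow_le_one (by linarith [hx.2]) (by linarith [hx.1]) (by linarith))
  · exact (by fun_prop : Measurable _).aestronglyMeasurable

theorem laplace_exponent_regular_variation_general
    (ν : Measure ℝ) (γ : ℝ) (hγ0 : 0 ≤ γ) (hγ1 : γ < 1)
    (nubar : ℝ → ℝ)
    (hfin : ∀ x : ℝ, 0 < x → ν (Ico x 1) < ⊤)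
    (hnubar : ∀ x : ℝ, 0 < x → nubar x = (ν (Ico x 1)).toReal)
    (ℓ : ℝ → ℝ)
    (hℓpos : ∀ᶠ z in atTop, 0 < ℓ z)
    (hℓslow : ∀ c : ℝ, 0 < c → Tendsto (fun z => ℓ (c * z) / ℓ z) atTop (nhds 1))
    (htail : Tendsto (fun x => nubar x / (x ^ (-γ) * ℓ (1 / x)))
      (nhdsWithin 0 (Ioi (0:ℝ))) (nhds 1))
    (Φ : ℝ → ℝ)
    (hΦ : ∀ z : ℝ, 0 ≤ z → Φ z = ∫ x in Ioo (0:ℝ) 1, (1 - (1 - x) ^ z) ∂ν) :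
    Tendsto (fun z => Φ z / (Real.Gamma (1 - γ) * z ^ γ * ℓ z)) atTop (nhds 1) := by
  have htail' : Tendsto (fun x => nuBar ν x / (x ^ (-γ) * ℓ (1 / x))) (𝓝[>] 0) (𝓝 1) :=
    htail.congr' (eventually_nhdsWithin_of_forall fun x hx => by rw [hnubar x hx]; rfl)
  have hlim := (tendsto_integral_one_sub_div_rpow_mul hγ0 hγ1 (measurable_nuBar ν)
    (fun _ => ENNReal.toReal_nonneg) (fun _ => nuBar_of_one_le ν) (antitoneOn_nuBar hfin)
    hℓpos hℓslow htail').div_const (Gamma (1 - γ))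
  rw [div_self (Gamma_pos_of_pos (by linarith)).ne'] at hlim
  refine hlim.congr' ?_
  filter_upwards [eventually_ge_atTop 1] with z hz
  have hz0 : 0 < z := by linarith
  rw [hΦ z hz0.le, integral_one_sub_one_sub_rpow hfin hz, ← integral_Ioi_comp_div _ hz0]
  simp_rw [← mul_div_assoc, integral_div]
  ring

/-- Karamata-type Tauberian theorem: if the tail `ν̄(x) = ν([x,1))` satisfies
`ν̄(x) ~ x^(-γ) ℓ(1/x)` as `x ↓ 0` with `γ ∈ [0,1)` and `ℓ` slowly varying at
`∞`, then the Laplace exponent satisfies `Φ(z) ~ Γ(1-γ) z^γ ℓ(z)` as `z → ∞`. -/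
theorem laplace_exponent_regular_variation
    (ν : Measure ℝ) (γ : ℝ) (hγ0 : 0 ≤ γ) (hγ1 : γ < 1)
    (hx : Integrable (fun x => x) (ν.restrict (Ioo (0:ℝ) 1)))
    (nubar : ℝ → ℝ)
    (hfin : ∀ x : ℝ, 0 < x → ν (Ico x 1) < ⊤)
    (hnubar : ∀ x : ℝ, 0 < x → nubar x = (ν (Ico x 1)).toReal)
    (ℓ : ℝ → ℝ)
    (hℓpos : ∀ᶠ z in atTop, 0 < ℓ z)
    (hℓslow : ∀ c : ℝ, 0 < c → Tendsto (fun z => ℓ (c * z) / ℓ z) atTop (nhds 1))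
    (htail : Tendsto (fun x => nubar x / (x ^ (-γ) * ℓ (1 / x)))
      (nhdsWithin 0 (Ioi (0:ℝ))) (nhds 1))
    (Φ : ℝ → ℝ)
    (hΦ : ∀ z : ℝ, 0 ≤ z → Φ z = ∫ x in Ioo (0:ℝ) 1, (1 - (1 - x) ^ z) ∂ν) :
    Tendsto (fun z => Φ z / (Real.Gamma (1 - γ) * z ^ γ * ℓ z)) atTop (nhds 1) :=
  laplace_exponent_regular_variation_general ν γ hγ0 hγ1 nubar hfin hnubar ℓ hℓpos hℓslow htail Φ hΦ
end
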